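/- arXiv:1808.05719 — 8 statements merged into one kernel-verified Lean document; each statement's English description precedes it below -/
import Mathlib

section
/- For integers $n \ge 2$ and $d \ge 2$, the number of 'good' partitions of $\{1,\ldots,n\}$ into $d$ parts (i.e., partitions $\{A_1,\ldots,A_d\}$ where $A_1 \sqcup A_2$ is an initial segment of $\{1,\ldots,n\}$ and $A_3,\ldots,A_d$ are intervals of consecutive integers) equals $\sum_{i \le n-d,\ i \equiv n-d \pmod 2} \binom{n}{i}$. -/
/-- `P` is a partition of `Fin n` (into nonempty, pairwise covering parts). -/
def IsPartitionOf (n : ℕ) (P : Finset (Finset (Fin n))) : Prop :=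
  (∀ A ∈ P, A.Nonempty) ∧ (∀ x : Fin n, ∃! A, A ∈ P ∧ x ∈ A)

/-- `P` is a good partition: it can be written as `{A₁,…,A_d}` where `A₁ ⊔ A₂` is an
initial segment of `{1,…,n}` and the remaining parts are intervals of consecutive
integers. -/
def IsGoodPartition (n : ℕ) (P : Finset (Finset (Fin n))) : Prop :=
  ∃ A1 ∈ P, ∃ A2 ∈ P, A1 ≠ A2 ∧
    (∃ m : ℕ, A1 ∪ A2 = Finset.univ.filter (fun x : Fin n => (x : ℕ) < m)) ∧
    (∀ A ∈ P, A ≠ A1 → A ≠ A2 →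
      ∃ l m : ℕ, A = Finset.univ.filter (fun x : Fin n => l ≤ (x : ℕ) ∧ (x : ℕ) < m))

/-! Index `{1, …, n}` as `Fin n = {0, …, n - 1}` and let `0 ∈ A₁`. A good partition is then
determined by the length `k` of the initial segment `A₁ ∪ A₂ = [0, k)`, the proper subset
`S = A₁ \ {0}` of `(0, k)`, and the set `M ⊆ [k, n)` of left endpoints of the intervals
`A₃, …, A_d`, which contains `k` unless `k = n`. For `d = j + 2` this gives
`∑ₖ (2 ^ (k - 1) - 1) · c(n - k, j)` good partitions, `c(m, j)` being the number of compositions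
of `m` into `j` parts. This sum and `∑_{i ≤ n - d, i ≡ n - d (2)} C(n, i)` both satisfy Pascal's
recurrence in `(n, d)` (the latter because `C(n + 1, i) = C(n, i) + C(n, i - 1)`), and both equal
`2 ^ (n - 1) - 1` when `d = 2`. -/

open Finset

def paritySum (n : ℕ) (j : ℤ) : ℕ :=
  ∑ i ∈ (range (n + 1)).filter (fun i : ℕ => (i : ℤ) ≤ j ∧ (j - i) % 2 = 0), n.choose i

lemma paritySum_eq_sum_range {n N : ℕ} (j : ℤ) (hN : n < N) :
    paritySum n j =
      ∑ i ∈ range N, if (i : ℤ) ≤ j ∧ (j - i) % 2 = 0 then n.choose i else 0 := by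
  rw [paritySum, sum_filter]
  refine sum_subset (range_subset_range.2 hN) fun i _ hi => ?_
  rw [Nat.choose_eq_zero_of_lt (by simpa using hi), ite_self]

lemma paritySum_succ (n : ℕ) (j : ℤ) :
    paritySum (n + 1) j = paritySum n j + paritySum n (j - 1) := by
  rw [paritySum_eq_sum_range j (lt_add_one (n + 1)),
    paritySum_eq_sum_range j (by omega : n < n + 2), paritySum_eq_sum_range (j - 1) (lt_add_one n),
    sum_range_succ', sum_range_succ' _ (n + 1)]
  simp only [Nat.choose_succ_succ', ite_add_zero, sum_add_distrib, Nat.choose_zero_right]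
  have h : ∀ i : ℕ, ((((i + 1 : ℕ) : ℤ) ≤ j ∧ (j - (i + 1 : ℕ)) % 2 = 0) ↔
      ((i : ℤ) ≤ j - 1 ∧ (j - 1 - i) % 2 = 0)) := fun i => by push_cast; omega
  simp only [h]
  ring

lemma paritySum_of_neg {n : ℕ} {j : ℤ} (hj : j < 0) : paritySum n j = 0 :=
  sum_eq_zero fun i hi => by
    rw [mem_filter] at hi
    omega

lemma paritySum_add_paritySum_sub_one (n : ℕ) (j : ℤ) :
    paritySum n j + paritySum n (j - 1) =
      ∑ i ∈ (range (n + 1)).filter (fun i : ℕ => (i : ℤ) ≤ j), n.choose i := by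
  rw [paritySum, paritySum, sum_filter, sum_filter, sum_filter, ← sum_add_distrib]
  refine sum_congr rfl fun i _ => ?_
  split_ifs <;> omega

lemma paritySum_succ_self_sub_one (n : ℕ) : paritySum (n + 1) (n - 1) = 2 ^ n - 1 := by
  have hrange : (range (n + 1)).filter (fun i : ℕ => (i : ℤ) ≤ n - 1) = range n := by
    ext i
    simp only [mem_filter, mem_range]
    omega
  have hsum := Nat.sum_range_choose n
  rw [sum_range_succ, Nat.choose_self] at hsum
  rw [paritySum_succ, paritySum_add_paritySum_sub_one, hrange]
  omega

/-- The number `C(m - 1, j - 1)` of compositions of `m` into `j` positive parts, with the empty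
composition of `0`. -/
def compositionCount : ℕ → ℕ → ℕ
  | 0, 0 => 1
  | 0, _ + 1 => 0
  | _ + 1, 0 => 0
  | m + 1, j + 1 => m.choose j

lemma compositionCount_succ_succ (m j : ℕ) :
    compositionCount (m + 1) (j + 1) = compositionCount m j + compositionCount m (j + 1) := by
  cases m <;> cases j <;> simp [compositionCount, Nat.choose_succ_succ']

lemma sum_mul_compositionCount (n j : ℕ) :
    ∑ k ∈ range (n + 1), (2 ^ (k - 1) - 1) * compositionCount (n - k) j =
      paritySum n (n - (j + 2 : ℕ)) := by
  induction n generalizing j with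
  | zero => rw [paritySum_of_neg (by omega)]; simp
  | succ n ih =>
    rw [sum_range_succ, Nat.sub_self]
    cases j with
    | zero =>
      rw [sum_eq_zero fun k hk => ?_, zero_add]
      · rw [compositionCount, mul_one, ← paritySum_succ_self_sub_one]
        congr 1
        push_cast
        ring
      · rw [Nat.succ_sub (mem_range_succ_iff.1 hk), compositionCount, mul_zero]
    | succ j =>
      have hsplit : ∀ k ∈ range (n + 1),
          (2 ^ (k - 1) - 1) * compositionCount (n + 1 - k) (j + 1) =
            (2 ^ (k - 1) - 1) * compositionCount (n - k) j +
              (2 ^ (k - 1) - 1) * compositionCount (n - k) (j + 1) := fun k hk => by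
        rw [Nat.succ_sub (mem_range_succ_iff.1 hk), compositionCount_succ_succ, mul_add]
      rw [sum_congr rfl hsplit, sum_add_distrib, ih, ih, compositionCount, mul_zero, add_zero,
        paritySum_succ]
      congr 2 <;> push_cast <;> ring

def Finset.fin (n : ℕ) (s : Finset ℕ) : Finset (Fin n) := univ.filter fun x => (x : ℕ) ∈ s

@[simp] lemma Finset.mem_fin {n : ℕ} {s : Finset ℕ} {x : Fin n} :
    x ∈ s.fin n ↔ (x : ℕ) ∈ s := by
  simp [Finset.fin]

lemma Finset.fin_inj {n : ℕ} {s t : Finset ℕ} (hs : s ⊆ range n) (ht : t ⊆ range n) :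
    s.fin n = t.fin n ↔ s = t := by
  refine ⟨fun h => ?_, congrArg _⟩
  ext i
  constructor <;> intro hi
  · simpa [h] using (mem_fin.2 hi : (⟨i, mem_range.1 (hs hi)⟩ : Fin n) ∈ s.fin n)
  · simpa [← h] using (mem_fin.2 hi : (⟨i, mem_range.1 (ht hi)⟩ : Fin n) ∈ t.fin n)

namespace IsPartitionOf
variable {n : ℕ} {P Q : Finset (Finset (Fin n))} {A B : Finset (Fin n)} {x : Fin n}

lemma of_cover (hne : ∀ A ∈ P, A.Nonempty) (hcover : ∀ x, ∃ A ∈ P, x ∈ A)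
    (hdisj : ∀ A ∈ P, ∀ B ∈ P, ∀ x ∈ A, x ∈ B → A = B) : IsPartitionOf n P :=
  ⟨hne, fun x => (hcover x).elim fun A hA =>
    ⟨A, hA, fun B hB => hdisj B hB.1 A hA.1 x hB.2 hA.2⟩⟩

lemma eq_of_mem_of_mem (hP : IsPartitionOf n P) (hA : A ∈ P) (hB : B ∈ P) (hxA : x ∈ A)
    (hxB : x ∈ B) : A = B :=
  (hP.2 x).unique ⟨hA, hxA⟩ ⟨hB, hxB⟩

lemma eq_of_subset (hP : IsPartitionOf n P) (hQ : IsPartitionOf n Q) (h : P ⊆ Q) : P = Q := by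
  refine h.antisymm fun B hB => ?_
  obtain ⟨x, hxB⟩ := hQ.1 B hB
  obtain ⟨A, ⟨hA, hxA⟩, -⟩ := hP.2 x
  rwa [← hQ.eq_of_mem_of_mem (h hA) hB hxA hxB]

end IsPartitionOf

section Blocks
variable {M M' : Finset ℕ} {n k l l' : ℕ} {x : Fin n}

def nextStart (M : Finset ℕ) (n l : ℕ) : ℕ :=
  (insert n (M.filter (l < ·))).min' (insert_nonempty _ _)

def block (M : Finset ℕ) (n l : ℕ) : Finset (Fin n) := (Ico l (nextStart M n l)).fin n

lemma mem_block : x ∈ block M n l ↔ l ≤ x ∧ ∀ t ∈ M, l < t → (x : ℕ) < t := by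
  simp [block, nextStart, lt_min'_iff, x.isLt]

lemma mem_block_self (hl : l < n) : (⟨l, hl⟩ : Fin n) ∈ block M n l :=
  mem_block.2 ⟨le_rfl, fun _ _ => id⟩

lemma eq_of_mem_block_of_mem_block (hl : l ∈ M) (hl' : l' ∈ M) (hx : x ∈ block M n l)
    (hx' : x ∈ block M n l') : l = l' := by
  rw [mem_block] at hx hx'
  by_contra h
  rcases Ne.lt_or_gt h with h | h
  · exact absurd (hx.2 l' hl' h) (not_lt.2 hx'.1)
  · exact absurd (hx'.2 l hl h) (not_lt.2 hx.1)

lemma exists_mem_block (hk : k ∈ M) (hx : k ≤ x) : ∃ l ∈ M, x ∈ block M n l := by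
  have hne : (M.filter (· ≤ (x : ℕ))).Nonempty := ⟨k, mem_filter.2 ⟨hk, hx⟩⟩
  obtain ⟨hlM, hlx⟩ := mem_filter.1 (max'_mem _ hne)
  refine ⟨_, hlM, mem_block.2 ⟨hlx, fun t ht hlt => not_le.1 fun htx => ?_⟩⟩
  exact absurd (le_max' _ t (mem_filter.2 ⟨ht, htx⟩)) (not_le.2 hlt)

lemma eq_of_block_eq (hl : l < n) (hl' : l' < n) (h : block M n l = block M' n l') : l = l' :=
  le_antisymm (mem_block.1 (h ▸ mem_block_self hl' : (⟨l', hl'⟩ : Fin n) ∈ block M n l)).1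
    (mem_block.1 (h ▸ mem_block_self hl : (⟨l, hl⟩ : Fin n) ∈ block M' n l')).1

lemma eq_of_image_block_eq (hM : M ⊆ range n) (hM' : M' ⊆ range n)
    (h : M.image (block M n) = M'.image (block M' n)) : M = M' := by
  have key : ∀ {M M' : Finset ℕ}, M ⊆ range n → M' ⊆ range n →
      M.image (block M n) = M'.image (block M' n) → M ⊆ M' := fun hM hM' h l hl => by
    obtain ⟨l', hl', he⟩ := mem_image.1 (h ▸ mem_image_of_mem (block _ n) hl)
    rwa [eq_of_block_eq (mem_range.1 (hM hl)) (mem_range.1 (hM' hl')) he.symm]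
  exact (key hM hM' h).antisymm (key hM' hM h.symm)

end Blocks

def splits (k : ℕ) : Finset (Finset ℕ) := (Ioo 0 k).powerset.erase (Ioo 0 k)

def blockStarts (n k : ℕ) : Finset (Finset ℕ) :=
  (Ico k n).powerset.filter fun M => k = n ∨ k ∈ M

def goodPartition (n k : ℕ) (S M : Finset ℕ) : Finset (Finset (Fin n)) :=
  insert ((insert 0 S).fin n) (insert ((Ioo 0 k \ S).fin n) (M.image (block M n)))

section GoodPartition
variable {n k : ℕ} {S M : Finset ℕ}

lemma mem_splits : S ∈ splits k ↔ S ⊆ Ioo 0 k ∧ S ≠ Ioo 0 k := by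
  rw [splits, mem_erase, mem_powerset, and_comm]

lemma mem_blockStarts : M ∈ blockStarts n k ↔ M ⊆ Ico k n ∧ (k = n ∨ k ∈ M) := by
  rw [blockStarts, mem_filter, mem_powerset]

lemma exists_notMem_of_mem_splits (hS : S ∈ splits k) : ∃ u, 0 < u ∧ u < k ∧ u ∉ S := by
  obtain ⟨hS, hne⟩ := mem_splits.1 hS
  obtain ⟨u, hu, huS⟩ := exists_of_ssubset (hS.ssubset_of_ne hne)
  exact ⟨u, (mem_Ioo.1 hu).1, (mem_Ioo.1 hu).2, huS⟩

lemma le_of_mem_blockStarts (hM : M ∈ blockStarts n k) : k ≤ n := by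
  obtain ⟨hM, rfl | hk⟩ := mem_blockStarts.1 hM
  · exact le_rfl
  · exact (mem_Ico.1 (hM hk)).2.le

lemma mem_goodPartition {A : Finset (Fin n)} : A ∈ goodPartition n k S M ↔
    A = (insert 0 S).fin n ∨ A = (Ioo 0 k \ S).fin n ∨ ∃ l ∈ M, block M n l = A := by
  simp only [goodPartition, mem_insert, mem_image]

lemma le_of_mem_block_of_mem_blockStarts (hM : M ∈ blockStarts n k) {l : ℕ} (hl : l ∈ M)
    {x : Fin n} (hx : x ∈ block M n l) : k ≤ x :=
  (mem_Ico.1 ((mem_blockStarts.1 hM).1 hl)).1.trans (mem_block.1 hx).1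

lemma isPartitionOf_goodPartition (hS : S ∈ splits k) (hM : M ∈ blockStarts n k) :
    IsPartitionOf n (goodPartition n k S M) := by
  obtain ⟨u, hu0, huk, huS⟩ := exists_notMem_of_mem_splits hS
  have hSk := (mem_splits.1 hS).1
  have hkn := le_of_mem_blockStarts hM
  have hlow : ∀ x ∈ insert 0 S, x < k := fun x hx => by
    rcases mem_insert.1 hx with rfl | hx
    · omega
    · exact (mem_Ioo.1 (hSk hx)).2
  refine IsPartitionOf.of_cover (fun A hA => ?_) (fun x => ?_) fun A hA B hB x hxA hxB => ?_
  · rcases mem_goodPartition.1 hA with rfl | rfl | ⟨l, hl, rfl⟩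
    · exact ⟨⟨0, by omega⟩, by simp⟩
    · exact ⟨⟨u, by omega⟩, by simp [hu0, huk, huS]⟩
    · exact ⟨_, mem_block_self (mem_Ico.1 ((mem_blockStarts.1 hM).1 hl)).2⟩
  · by_cases hxk : (x : ℕ) < k
    · by_cases hx : (x : ℕ) ∈ insert 0 S
      · exact ⟨_, mem_insert_self _ _, mem_fin.2 hx⟩
      · refine ⟨_, mem_insert_of_mem (mem_insert_self _ _), mem_fin.2 ?_⟩
        simp only [mem_insert, not_or] at hx
        simp [hx.2, hxk, Nat.pos_of_ne_zero hx.1]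
    · have hkM : k ∈ M := (mem_blockStarts.1 hM).2.resolve_left (by omega)
      obtain ⟨l, hl, hxl⟩ := exists_mem_block hkM (not_lt.1 hxk)
      exact ⟨_, mem_goodPartition.2 (Or.inr (Or.inr ⟨l, hl, rfl⟩)), hxl⟩
  · have h1 := hlow x
    have h2 : ∀ l ∈ M, x ∈ block M n l → k ≤ x := fun l hl =>
      le_of_mem_block_of_mem_blockStarts hM hl
    rcases mem_goodPartition.1 hA with rfl | rfl | ⟨l, hl, rfl⟩ <;>
    rcases mem_goodPartition.1 hB with rfl | rfl | ⟨l', hl', rfl⟩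
    all_goals try simp only [mem_fin, mem_sdiff, mem_Ioo] at hxA hxB
    all_goals first
      | rfl
      | rw [eq_of_mem_block_of_mem_block hl hl' hxA hxB]
      | grind

lemma initialParts_notMem (hS : S ∈ splits k) (hM : M ∈ blockStarts n k) :
    (insert 0 S).fin n ∉ insert ((Ioo 0 k \ S).fin n) (M.image (block M n)) ∧
      (Ioo 0 k \ S).fin n ∉ M.image (block M n) := by
  obtain ⟨u, hu0, huk, huS⟩ := exists_notMem_of_mem_splits hS
  have hkn := le_of_mem_blockStarts hM
  have hblock : ∀ {A : Finset (Fin n)} {x : Fin n}, (x : ℕ) < k → x ∈ A →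
      A ∉ M.image (block M n) := fun hxk hxA hA => by
    obtain ⟨l, hl, rfl⟩ := mem_image.1 hA
    exact absurd (le_of_mem_block_of_mem_blockStarts hM hl hxA) (not_le.2 hxk)
  refine ⟨?_, hblock (x := ⟨u, by omega⟩) huk (by simp [hu0, huk, huS])⟩
  rw [mem_insert, not_or]
  refine ⟨fun h => ?_, hblock (x := ⟨0, by omega⟩) (by simpa using hu0.trans huk) (by simp)⟩
  have h0 : (⟨0, by omega⟩ : Fin n) ∈ (insert 0 S).fin n := by simp
  simp [h] at h0

lemma isGoodPartition_goodPartition (hS : S ∈ splits k) (hM : M ∈ blockStarts n k) :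
    IsGoodPartition n (goodPartition n k S M) := by
  obtain ⟨u, hu0, huk, -⟩ := exists_notMem_of_mem_splits hS
  have hSk := (mem_splits.1 hS).1
  refine ⟨_, mem_insert_self _ _, _, mem_insert_of_mem (mem_insert_self _ _), fun h => ?_,
    ⟨k, ?_⟩, fun A hA h1 h2 => ?_⟩
  · exact (initialParts_notMem hS hM).1 (h ▸ mem_insert_self _ _)
  · ext x
    have := @hSk x
    simp only [mem_union, mem_fin, mem_insert, mem_sdiff, mem_Ioo, mem_filter, mem_univ,
      true_and]
    grind
  · rcases mem_goodPartition.1 hA with rfl | rfl | ⟨l, -, rfl⟩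
    · exact absurd rfl h1
    · exact absurd rfl h2
    · exact ⟨l, nextStart M n l, by ext; simp [block]⟩

lemma card_goodPartition (hS : S ∈ splits k) (hM : M ∈ blockStarts n k) :
    (goodPartition n k S M).card = M.card + 2 := by
  obtain ⟨h1, h2⟩ := initialParts_notMem hS hM
  have hMsub := (mem_blockStarts.1 hM).1
  rw [goodPartition, card_insert_of_notMem h1, card_insert_of_notMem h2, card_image_of_injOn]
  exact fun l hl l' hl' h =>
    eq_of_block_eq (mem_Ico.1 (hMsub hl)).2 (mem_Ico.1 (hMsub hl')).2 h

lemma eq_of_goodPartition_eq {k' : ℕ} {S' M' : Finset ℕ} (hS : S ∈ splits k)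
    (hM : M ∈ blockStarts n k) (hS' : S' ∈ splits k') (hM' : M' ∈ blockStarts n k')
    (h : goodPartition n k S M = goodPartition n k' S' M') : k = k' ∧ S = S' ∧ M = M' := by
  have hP := isPartitionOf_goodPartition hS hM
  obtain ⟨u, hu0, huk, huS⟩ := exists_notMem_of_mem_splits hS
  obtain ⟨u', hu0', huk', huS'⟩ := exists_notMem_of_mem_splits hS'
  have hkn := le_of_mem_blockStarts hM
  have hkn' := le_of_mem_blockStarts hM'
  have hSk := (mem_splits.1 hS).1
  have hSk' := (mem_splits.1 hS').1
  have hsub : ∀ {a : ℕ} {T : Finset ℕ}, T ⊆ Ioo 0 a → a ≤ n → T ⊆ range n :=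
    fun hT ha x hx => mem_range.2 ((mem_Ioo.1 (hT hx)).2.trans_le ha)
  have h0 : (insert 0 S).fin n = (insert 0 S').fin n :=
    hP.eq_of_mem_of_mem (x := ⟨0, by omega⟩) (mem_insert_self _ _) (h ▸ mem_insert_self _ _)
      (by simp) (by simp)
  obtain rfl : S = S' := by
    rw [fin_inj (insert_subset (mem_range.2 (by omega)) (hsub hSk hkn))
      (insert_subset (mem_range.2 (by omega)) (hsub hSk' hkn'))] at h0
    calc S = (insert 0 S).erase 0 := (erase_insert fun h => by simpa using hSk h).symm
      _ = (insert 0 S').erase 0 := by rw [h0]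
      _ = S' := erase_insert fun h => by simpa using hSk' h
  have h1 : (Ioo 0 k \ S).fin n = (Ioo 0 k' \ S).fin n :=
    hP.eq_of_mem_of_mem (x := ⟨min u u', by omega⟩) (mem_insert_of_mem (mem_insert_self _ _))
      (h ▸ mem_insert_of_mem (mem_insert_self _ _))
      (by simp only [mem_fin, mem_sdiff, mem_Ioo]; grind)
      (by simp only [mem_fin, mem_sdiff, mem_Ioo]; grind)
  obtain rfl : k = k' := by
    rw [fin_inj (hsub sdiff_subset hkn) (hsub sdiff_subset hkn')] at h1
    have key : ∀ a b : ℕ, 0 < a → S ⊆ Ioo 0 a → Ioo 0 a \ S = Ioo 0 b \ S → b ≤ a := by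
      refine fun a b ha hSa hab => not_lt.1 fun hlt => ?_
      have : a ∈ Ioo 0 b \ S := mem_sdiff.2 ⟨mem_Ioo.2 ⟨ha, hlt⟩, fun h => by simpa using hSa h⟩
      rw [← hab, mem_sdiff, mem_Ioo] at this
      exact lt_irrefl a this.1.2
    exact le_antisymm (key _ _ (by omega) hSk' h1.symm) (key _ _ (by omega) hSk h1)
  obtain ⟨h1, h2⟩ := initialParts_notMem hS hM
  obtain ⟨h1', h2'⟩ := initialParts_notMem hS' hM'
  refine ⟨rfl, rfl, eq_of_image_block_eq
    (fun l hl => mem_range.2 (mem_Ico.1 ((mem_blockStarts.1 hM).1 hl)).2)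
    (fun l hl => mem_range.2 (mem_Ico.1 ((mem_blockStarts.1 hM').1 hl)).2) ?_⟩
  calc M.image (block M n)
      = ((goodPartition n k S M).erase ((insert 0 S).fin n)).erase ((Ioo 0 k \ S).fin n) := by
        rw [goodPartition, erase_insert h1, erase_insert h2]
    _ = ((goodPartition n k S M').erase ((insert 0 S).fin n)).erase ((Ioo 0 k \ S).fin n) := by
        rw [h]
    _ = M'.image (block M' n) := by rw [goodPartition, erase_insert h1', erase_insert h2']

end GoodPartition

def cutPoints {n : ℕ} (P : Finset (Finset (Fin n))) : Finset ℕ :=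
  (range n).filter fun t => ∀ A ∈ P, ∀ x ∈ A, ∀ y ∈ A, (x : ℕ) + 1 = t → (y : ℕ) ≠ t

section Surjectivity
variable {n k a m : ℕ} {P : Finset (Finset (Fin n))} {A A1 A2 : Finset (Fin n)}

lemma exists_mem_splits (hdisj : Disjoint A1 A2) (hA2 : A2.Nonempty)
    (h0 : ∀ x ∈ A2, (x : ℕ) ≠ 0) (hunion : ∀ x : Fin n, x ∈ A1 ∨ x ∈ A2 ↔ (x : ℕ) < k) :
    ∃ S ∈ splits k, (insert 0 S).fin n = A1 ∧ (Ioo 0 k \ S).fin n = A2 := by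
  obtain ⟨u, hu⟩ := hA2
  have huk := (hunion u).1 (Or.inr hu)
  have h0A1 : (⟨0, u.pos⟩ : Fin n) ∈ A1 :=
    ((hunion _).2 (by simp only; omega)).resolve_right fun h => h0 _ h rfl
  set S := (A1.image Fin.val).erase 0
  have hS : ∀ x : Fin n, (x : ℕ) ∈ S ↔ x ∈ A1 ∧ (x : ℕ) ≠ 0 := fun x => by
    simp [S, and_comm, Fin.val_inj]
  refine ⟨S, mem_splits.2 ⟨fun t ht => ?_, fun h => ?_⟩, ?_, ?_⟩
  · obtain ⟨ht0, x, hx, rfl⟩ := by simpa [S] using ht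
    exact mem_Ioo.2 ⟨Nat.pos_of_ne_zero ht0, (hunion x).1 (Or.inl hx)⟩
  · have : (u : ℕ) ∈ S := h ▸ mem_Ioo.2 ⟨Nat.pos_of_ne_zero (h0 u hu), huk⟩
    exact disjoint_left.1 hdisj ((hS u).1 this).1 hu
  · ext x
    rw [mem_fin, mem_insert, hS]
    by_cases hx0 : (x : ℕ) = 0
    · obtain rfl : x = ⟨0, u.pos⟩ := Fin.ext hx0
      simpa using h0A1
    · simp [hx0]
  · ext x
    rw [mem_fin, mem_sdiff, mem_Ioo, hS, ← hunion]
    have := @disjoint_left.1 hdisj x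
    have := h0 x
    grind

lemma filter_cutPoints_mem_blockStarts (hk : k ≤ n)
    (hlow : ∀ A ∈ P, ∀ x ∈ A, ∀ y ∈ A, (x : ℕ) < k → (y : ℕ) < k) :
    (cutPoints P).filter (k ≤ ·) ∈ blockStarts n k := by
  refine mem_blockStarts.2 ⟨fun t ht => ?_, (eq_or_lt_of_le hk).imp id fun hkn => ?_⟩
  · obtain ⟨ht, hkt⟩ := mem_filter.1 ht
    exact mem_Ico.2 ⟨hkt, mem_range.1 (mem_filter.1 ht).1⟩
  · refine mem_filter.2 ⟨mem_filter.2 ⟨mem_range.2 hkn, fun B hB x hx y hy hxk hyk => ?_⟩, le_rfl⟩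
    have := hlow B hB x hx y hy (by omega)
    omega

lemma IsPartitionOf.eq_block_of_mem (hP : IsPartitionOf n P) (hA : A ∈ P)
    (hAk : ∀ x ∈ A, k ≤ (x : ℕ))
    (hAseg : A = univ.filter fun x : Fin n => a ≤ (x : ℕ) ∧ (x : ℕ) < m) :
    a ∈ (cutPoints P).filter (k ≤ ·) ∧ block ((cutPoints P).filter (k ≤ ·)) n a = A := by
  have memA : ∀ x : Fin n, x ∈ A ↔ a ≤ x ∧ (x : ℕ) < m := by simp [hAseg]
  obtain ⟨y, hy⟩ := hP.1 A hA
  have hay := (memA y).1 hy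
  have ha : (⟨a, by omega⟩ : Fin n) ∈ A := (memA _).2 ⟨le_rfl, by simp only; omega⟩
  have hka : k ≤ a := hAk _ ha
  refine ⟨mem_filter.2 ⟨mem_filter.2 ⟨mem_range.2 (by omega), ?_⟩, hka⟩, ?_⟩
  · intro B hB x hx z hz hxa hza
    have := (memA x).1 (hP.eq_of_mem_of_mem hB hA hz ((memA z).2 (by omega)) ▸ hx)
    omega
  ext x
  rw [mem_block, memA]
  constructor
  · refine fun ⟨hax, hx⟩ => ⟨hax, not_le.1 fun hmx => ?_⟩
    have hmM : m ∈ (cutPoints P).filter (k ≤ ·) := by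
      refine mem_filter.2 ⟨mem_filter.2 ⟨mem_range.2 (by omega), ?_⟩, by omega⟩
      intro B hB z hz w hw hzm hwm
      have := (memA w).1 (hP.eq_of_mem_of_mem hB hA hz ((memA z).2 (by omega)) ▸ hw)
      omega
    exact absurd (hx m hmM (by omega)) (not_lt.2 hmx)
  · refine fun ⟨hax, hxm⟩ => ⟨hax, fun t ht hat => not_le.1 fun htx => ?_⟩
    obtain ⟨htn, hcut⟩ := mem_filter.1 (mem_filter.1 ht).1
    exact hcut A hA ⟨t - 1, by omega⟩ ((memA _).2 (by simp only; omega)) ⟨t, mem_range.1 htn⟩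
      ((memA _).2 (by simp only; omega)) (by simp only; omega) rfl

lemma IsPartitionOf.exists_eq_goodPartition (hP : IsPartitionOf n P)
    (hgood : IsGoodPartition n P) :
    ∃ k S M, S ∈ splits k ∧ M ∈ blockStarts n k ∧ goodPartition n k S M = P := by
  obtain ⟨A1, hA1, A2, hA2, h12, ⟨m, hm⟩, hseg⟩ := hgood
  wlog h0 : ∀ x ∈ A2, (x : ℕ) ≠ 0 generalizing A1 A2
  · push Not at h0
    obtain ⟨x, hx, hx0⟩ := h0
    refine this A2 hA2 A1 hA1 h12.symm (fun A hA h2 h1 => hseg A hA h1 h2)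
      (by rw [union_comm, hm]) fun y hy hy0 => h12 (hP.eq_of_mem_of_mem hA1 hA2 hy ?_)
    rwa [Fin.ext (hy0.trans hx0.symm)]
  set k := min m n
  have hunion : ∀ x : Fin n, x ∈ A1 ∨ x ∈ A2 ↔ (x : ℕ) < k := fun x => by
    rw [← mem_union, hm]
    simp [k, x.isLt]
  have hhigh : ∀ A ∈ P, A ≠ A1 → A ≠ A2 → ∀ x ∈ A, k ≤ (x : ℕ) := fun A hA h1 h2 x hx =>
    not_lt.1 fun hxk => ((hunion x).2 hxk).elim (h1 <| hP.eq_of_mem_of_mem hA hA1 hx ·)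
      (h2 <| hP.eq_of_mem_of_mem hA hA2 hx ·)
  have hM := filter_cutPoints_mem_blockStarts (P := P) (min_le_right m n)
    fun A hA x hx y hy hxk => (hunion y).1 <| by
      by_cases h1 : A = A1
      · exact Or.inl (h1 ▸ hy)
      by_cases h2 : A = A2
      · exact Or.inr (h2 ▸ hy)
      exact absurd (hhigh A hA h1 h2 x hx) (not_le.2 hxk)
  obtain ⟨S, hS, rfl, rfl⟩ := exists_mem_splits
    (disjoint_left.2 fun x h1 h2 => h12 (hP.eq_of_mem_of_mem hA1 hA2 h1 h2)) (hP.1 A2 hA2) h0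
    hunion
  refine ⟨k, S, _, hS, hM,
    (hP.eq_of_subset (isPartitionOf_goodPartition hS hM) fun A hA => ?_).symm⟩
  rw [mem_goodPartition]
  by_cases h1 : A = (insert 0 S).fin n
  · exact Or.inl h1
  by_cases h2 : A = (Ioo 0 k \ S).fin n
  · exact Or.inr (Or.inl h2)
  obtain ⟨l, m', hseg⟩ := hseg A hA h1 h2
  obtain ⟨hl, hblock⟩ := hP.eq_block_of_mem hA (hhigh A hA h1 h2) hseg
  exact Or.inr (Or.inr ⟨l, hl, hblock⟩)

end Surjectivity

lemma card_splits (k : ℕ) : (splits k).card = 2 ^ (k - 1) - 1 := by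
  rw [splits, card_erase_of_mem (mem_powerset_self _), card_powerset, Nat.card_Ioo, Nat.sub_zero]

lemma card_filter_blockStarts {n k : ℕ} (hk : k ≤ n) (j : ℕ) :
    ((blockStarts n k).filter (·.card = j)).card = compositionCount (n - k) j := by
  obtain ⟨m, rfl⟩ := Nat.exists_eq_add_of_le hk
  rw [Nat.add_sub_cancel_left]
  rcases m with _ | m
  · cases j <;> simp [blockStarts, compositionCount, filter_singleton]
  rcases j with _ | j
  · simp only [compositionCount, card_eq_zero, filter_eq_empty_iff, mem_blockStarts]
    rintro M ⟨-, hk | hk⟩ rfl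
    · omega
    · simp at hk
  rw [compositionCount]
  calc _ = ((Ioo k (k + (m + 1))).powersetCard j).card := by
        refine card_nbij' (·.erase k) (insert k) (fun M hM => ?_) (fun c hc => ?_)
          (fun M hM => insert_erase ?_) (fun c hc => erase_insert ?_)
        · rw [mem_coe, mem_filter, mem_blockStarts] at hM
          obtain ⟨⟨hMsub, hk⟩, hcard⟩ := hM
          replace hk := hk.resolve_left (by omega)
          refine mem_powersetCard.2 ⟨fun x hx => ?_, by simp [card_erase_of_mem hk, hcard]⟩
          obtain ⟨hxk, hx⟩ := mem_erase.1 hx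
          have := mem_Ico.1 (hMsub hx)
          exact mem_Ioo.2 ⟨by omega, this.2⟩
        · obtain ⟨hcsub, hcard⟩ := mem_powersetCard.1 (mem_coe.1 hc)
          have hkc : k ∉ c := fun h => by simpa using hcsub h
          refine mem_filter.2 ⟨mem_blockStarts.2 ⟨insert_subset ?_ ?_,
            Or.inr (mem_insert_self _ _)⟩, ?_⟩
          · exact mem_Ico.2 ⟨le_rfl, by omega⟩
          · exact hcsub.trans Ioo_subset_Ico_self
          · rw [card_insert_of_notMem hkc, hcard]
        · rw [mem_coe, mem_filter, mem_blockStarts] at hM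
          exact hM.1.2.resolve_left (by omega)
        · exact fun h => by simpa using (mem_powersetCard.1 (mem_coe.1 hc)).1 h
    _ = m.choose j := by rw [card_powersetCard, Nat.card_Ioo]; congr 1; omega

/-- `splits k` is empty for `k < 2`, so `k` may range over all of `[0, n]`. -/
def goodData (n j : ℕ) : Finset (Σ _ : ℕ, Finset ℕ × Finset ℕ) :=
  (range (n + 1)).sigma fun k => splits k ×ˢ (blockStarts n k).filter (·.card = j)

lemma mem_goodData {n j k : ℕ} {S M : Finset ℕ} :
    ⟨k, S, M⟩ ∈ goodData n j ↔ S ∈ splits k ∧ M ∈ blockStarts n k ∧ M.card = j := by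
  simp only [goodData, mem_sigma, mem_product, mem_filter, mem_range]
  exact ⟨fun h => h.2, fun h => ⟨Nat.lt_succ_of_le (le_of_mem_blockStarts h.2.1), h⟩⟩

lemma card_goodData (n j : ℕ) :
    (goodData n j).card =
      ∑ k ∈ range (n + 1), (2 ^ (k - 1) - 1) * compositionCount (n - k) j := by
  rw [goodData, card_sigma]
  exact sum_congr rfl fun k hk => by
    rw [card_product, card_splits, card_filter_blockStarts (mem_range_succ_iff.1 hk)]

theorem stmt_0_general (n d : ℕ) (hd : 2 ≤ d) :
    Nat.card {P : Finset (Finset (Fin n)) //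
        IsPartitionOf n P ∧ P.card = d ∧ IsGoodPartition n P }
      = ∑ i ∈ (Finset.range (n + 1)).filter
          (fun i : ℕ => (i : ℤ) ≤ (n : ℤ) - d ∧ ((n : ℤ) - d - i) % 2 = 0), n.choose i := by
  classical
  obtain ⟨j, rfl⟩ := Nat.exists_eq_add_of_le' hd
  calc _ = (univ.filter fun P => IsPartitionOf n P ∧ P.card = j + 2 ∧ IsGoodPartition n P).card :=
        Nat.card_eq_fintype_card.trans (Fintype.card_subtype _)
    _ = (goodData n j).card := by
        refine (card_bij (fun p _ => goodPartition n p.1 p.2.1 p.2.2) ?_ ?_ ?_).symm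
        · rintro ⟨k, S, M⟩ hp
          obtain ⟨hS, hM, hcard⟩ := mem_goodData.1 hp
          exact mem_filter.2 ⟨mem_univ _, isPartitionOf_goodPartition hS hM,
            by rw [card_goodPartition hS hM, hcard], isGoodPartition_goodPartition hS hM⟩
        · rintro ⟨k, S, M⟩ hp ⟨k', S', M'⟩ hp' h
          obtain ⟨hS, hM, -⟩ := mem_goodData.1 hp
          obtain ⟨hS', hM', -⟩ := mem_goodData.1 hp'
          obtain ⟨rfl, rfl, rfl⟩ := eq_of_goodPartition_eq hS hM hS' hM' h
          rfl
        · intro P hP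
          obtain ⟨-, hpart, hcard, hgood⟩ := mem_filter.1 hP
          obtain ⟨k, S, M, hS, hM, rfl⟩ := hpart.exists_eq_goodPartition hgood
          rw [card_goodPartition hS hM, Nat.add_right_cancel_iff] at hcard
          exact ⟨⟨k, S, M⟩, mem_goodData.2 ⟨hS, hM, hcard⟩, rfl⟩
    _ = paritySum n (n - (j + 2 : ℕ)) := by rw [card_goodData, sum_mul_compositionCount]

/-- for `n ≥ 2` and `d ≥ 2`, the number of good partitions of `{1,…,n}`
into `d` parts equals `∑_{i ≤ n-d, i ≡ n-d mod 2} C(n,i)`. -/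
theorem stmt_0 (n d : ℕ) (hn : 2 ≤ n) (hd : 2 ≤ d) :
    Nat.card {P : Finset (Finset (Fin n)) //
        IsPartitionOf n P ∧ P.card = d ∧ IsGoodPartition n P }
      = ∑ i ∈ (Finset.range (n + 1)).filter
          (fun i : ℕ => (i : ℤ) ≤ (n : ℤ) - d ∧ ((n : ℤ) - d - i) % 2 = 0), n.choose i :=
  stmt_0_general n d hd
end

section
/- For all integers $n \ge 2$ and $d \ge 2$, the quantity $G_{d,n} = \sum_{k=1}^{n-d+2} (2^{k-1}-1)\binom{n-k-1}{n-k-d+2}$ equals $G'_{d,n} = \sum_{i \le n-d,\ i \equiv n-d \pmod 2} \binom{n}{i}$. -/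
/-!
In the coordinates `a = n - d`, `b = d - 2` the binomial `C(n-k-1, n-k-d+2)` is the multiset
coefficient `multichoose b (n-d+2-k)`, so `G_{d,n}` convolves the Mersenne numbers `2^j - 1` with a
column of multiset coefficients and satisfies Pascal's recurrence in `(a, b)`.
Splitting each `C(n, i)` of `G'_{d,n}` by Pascal's rule gives `G'_{d,n} = ∑_{i ≤ n-d} C(n-1, i)`,
a partial row sum of Pascal's triangle, which satisfies the same recurrence.
Both sides equal `1` when `a = 0` and `2^(a+1) - 1` when `b = 0`.
-/

/-- Integer binomial coefficient: `binom m r = C(m,r)` for `0 ≤ r ≤ m`, `0` otherwise,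
with the additional convention `binom (-1) 0 = 1`. -/
def binom (m r : ℤ) : ℤ :=
  if 0 ≤ r ∧ r ≤ m then (Nat.choose m.toNat r.toNat : ℤ)
  else if m = -1 ∧ r = 0 then 1 else 0

/-- `G_{d,n} = ∑_{k=1}^{n-d+2} (2^{k-1}-1) C(n-k-1, n-k-d+2)`. -/
noncomputable def Gdn (d n : ℤ) : ℤ :=
  ∑ k ∈ Finset.Icc (1 : ℤ) (n - d + 2), (2 ^ (k - 1).toNat - 1) * binom (n - k - 1) (n - k - d + 2)

/-- `G'_{d,n} = ∑_{0 ≤ i ≤ n-d, i ≡ n-d mod 2} C(n, i)`. -/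
noncomputable def Gdn' (d n : ℤ) : ℤ :=
  ∑ i ∈ (Finset.Icc (0 : ℤ) (n - d)).filter (fun i => (n - d - i) % 2 = 0), binom n i

open Finset

theorem sum_range_succ_choose_succ (N a : ℕ) :
    ∑ i ∈ range (a + 2), (N + 1).choose i =
      ∑ i ∈ range (a + 2), N.choose i + ∑ i ∈ range (a + 1), N.choose i := by
  simp only [sum_range_succ' _ (a + 1), Nat.choose_succ_succ', sum_add_distrib,
    Nat.choose_zero_right]
  ring

theorem sum_range_choose_self (n : ℕ) : ∑ i ∈ range n, n.choose i = mersenne n := by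
  have h := Nat.sum_range_choose n
  rw [sum_range_succ, Nat.choose_self, ← succ_mersenne] at h
  omega

theorem sum_range_ite_parity_choose_succ (N a : ℕ) :
    ∑ i ∈ range (a + 1), (if (a - i) % 2 = 0 then (N + 1).choose i else 0) =
      ∑ i ∈ range (a + 1), N.choose i := by
  induction a with
  | zero => simp
  | succ a ih =>
    rw [show a + 1 + 1 = a + 2 from rfl]
    have hpair : ∑ i ∈ range (a + 2), (if (a + 1 - i) % 2 = 0 then (N + 1).choose i else 0) +
        ∑ i ∈ range (a + 1), (if (a - i) % 2 = 0 then (N + 1).choose i else 0) =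
          ∑ i ∈ range (a + 2), (N + 1).choose i := by
      rw [sum_range_succ, Nat.sub_self, if_pos rfl, add_right_comm, ← sum_add_distrib,
        sum_range_succ _ (a + 1)]
      congr 1
      refine sum_congr rfl fun i hi => ?_
      have := mem_range.mp hi
      split_ifs <;> omega
    have := sum_range_succ_choose_succ N a
    omega

/-- `G_{b+2, a+b+2}`, with `C(a+b-j, a+1-j)` written as `multichoose b (a+1-j)`. -/
def mersenneMultichooseConv (a b : ℕ) : ℕ :=
  ∑ j ∈ range (a + 2), mersenne j * b.multichoose (a + 1 - j)

theorem mersenneMultichooseConv_zero_left (b : ℕ) : mersenneMultichooseConv 0 b = 1 := by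
  simp [mersenneMultichooseConv, sum_range_succ, mersenne]

theorem mersenneMultichooseConv_zero_right (a : ℕ) :
    mersenneMultichooseConv a 0 = mersenne (a + 1) := by
  rw [mersenneMultichooseConv, sum_range_succ, Nat.sub_self, Nat.multichoose_zero_right, mul_one,
    sum_eq_zero fun j hj => ?_, zero_add]
  rw [show a + 1 - j = a - j + 1 by have := mem_range.mp hj; omega, Nat.multichoose_zero_succ,
    mul_zero]

theorem mersenneMultichooseConv_succ_succ (a b : ℕ) :
    mersenneMultichooseConv (a + 1) (b + 1) =
      mersenneMultichooseConv (a + 1) b + mersenneMultichooseConv a (b + 1) := by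
  show ∑ j ∈ range (a + 3), mersenne j * (b + 1).multichoose (a + 2 - j) =
    ∑ j ∈ range (a + 3), mersenne j * b.multichoose (a + 2 - j) +
      ∑ j ∈ range (a + 2), mersenne j * (b + 1).multichoose (a + 1 - j)
  rw [sum_range_succ, sum_range_succ _ (a + 2), Nat.sub_self, Nat.multichoose_zero_right,
    Nat.multichoose_zero_right, add_right_comm, ← sum_add_distrib]
  congr 1
  refine sum_congr rfl fun j hj => ?_
  rw [show a + 2 - j = a + 1 - j + 1 by have := mem_range.mp hj; omega,
    Nat.multichoose_succ_succ, mul_add]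

theorem mersenneMultichooseConv_eq_sum_range_choose (a b : ℕ) :
    mersenneMultichooseConv a b = ∑ i ∈ range (a + 1), (a + b + 1).choose i := by
  induction a generalizing b with
  | zero => simp [mersenneMultichooseConv_zero_left]
  | succ a iha =>
    induction b with
    | zero => rw [mersenneMultichooseConv_zero_right, sum_range_choose_self]
    | succ b ihb =>
      rw [mersenneMultichooseConv_succ_succ, ihb, iha, show a + 1 + 1 = a + 2 from rfl,
        show a + 1 + (b + 1) + 1 = a + b + 2 + 1 by ring, sum_range_succ_choose_succ (a + b + 2),
        show a + 1 + b + 1 = a + b + 2 by ring, show a + (b + 1) + 1 = a + b + 2 by ring]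

theorem binom_natCast (m r : ℕ) : binom m r = m.choose r := by
  unfold binom
  split_ifs with h h'
  · simp
  · omega
  · rw [Nat.choose_eq_zero_of_lt (by omega), Nat.cast_zero]

theorem binom_eq_multichoose (b t : ℕ) : binom (b + t - 1) t = b.multichoose t := by
  rcases b with _ | b
  · rcases t with _ | t
    · simp [binom]
    · simp only [binom, Nat.multichoose_zero_succ]
      split_ifs <;> omega
  · rw [show ((b + 1 : ℕ) : ℤ) + t - 1 = (b + t : ℕ) by push_cast; ring, binom_natCast,
      Nat.multichoose_eq, Nat.add_right_comm, Nat.add_sub_cancel]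

theorem sum_Icc_int_eq_sum_range {M : Type*} [AddCommMonoid M] (f : ℤ → M) (c : ℤ) (m : ℕ) :
    ∑ k ∈ Icc c (c + m), f k = ∑ i ∈ range (m + 1), f (c + i) := by
  refine sum_nbij' (fun k => (k - c).toNat) (fun i => c + i) ?_ ?_ ?_ ?_ ?_ <;>
    intro x hx <;> simp only [mem_Icc, mem_range] at hx ⊢
  all_goals first | omega | (congr 1; omega)

theorem Gdn_eq_mersenneMultichooseConv (a b : ℕ) :
    Gdn (b + 2) (b + 2 + a) = mersenneMultichooseConv a b := by
  rw [Gdn, show (b : ℤ) + 2 + a - (b + 2) + 2 = 1 + (a + 1 : ℕ) by push_cast; ring,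
    sum_Icc_int_eq_sum_range, mersenneMultichooseConv, Nat.cast_sum]
  refine sum_congr rfl fun j hj => ?_
  have hj := mem_range.mp hj
  rw [show (1 + j - 1 : ℤ).toNat = j by omega,
    show (b : ℤ) + 2 + a - (1 + j) - 1 = b + (a + 1 - j : ℕ) - 1 by omega,
    show (b : ℤ) + 2 + a - (1 + j) - (b + 2) + 2 = (a + 1 - j : ℕ) by omega,
    binom_eq_multichoose]
  have hmersenne : ((mersenne j : ℕ) : ℤ) = 2 ^ j - 1 := by
    have h := congrArg (Nat.cast : ℕ → ℤ) (succ_mersenne j)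
    push_cast at h
    linarith
  rw [Nat.cast_mul, hmersenne]

theorem Gdn'_eq_sum_range_choose (a b : ℕ) :
    Gdn' (b + 2) (b + 2 + a) = ∑ i ∈ range (a + 1), (a + b + 1).choose i := by
  rw [Gdn', sum_filter, show (b : ℤ) + 2 + a - (b + 2) = 0 + a by ring, sum_Icc_int_eq_sum_range,
    ← sum_range_ite_parity_choose_succ, Nat.cast_sum]
  refine sum_congr rfl fun i hi => ?_
  have hi := mem_range.mp hi
  rw [show (b : ℤ) + 2 + a = (a + b + 1 + 1 : ℕ) by push_cast; ring]
  simp only [zero_add, binom_natCast]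
  split_ifs <;> first | rfl | omega

theorem Gdn_eq_zero_of_lt {d n : ℤ} (h : n < d) : Gdn d n = 0 :=
  sum_eq_zero fun k hk => by
    obtain rfl : k = 1 := by rw [mem_Icc] at hk; omega
    simp

theorem Gdn'_eq_zero_of_lt {d n : ℤ} (h : n < d) : Gdn' d n = 0 := by
  rw [Gdn', Icc_eq_empty_of_lt (by omega), filter_empty, sum_empty]

theorem stmt_1_general (n d : ℤ) (hd : 2 ≤ d) : Gdn d n = Gdn' d n := by
  rcases lt_or_ge n d with hlt | hle
  · rw [Gdn_eq_zero_of_lt hlt, Gdn'_eq_zero_of_lt hlt]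
  obtain ⟨b, rfl⟩ : ∃ b : ℕ, d = b + 2 := ⟨(d - 2).toNat, by omega⟩
  obtain ⟨a, rfl⟩ : ∃ a : ℕ, n = b + 2 + a := ⟨(n - (b + 2)).toNat, by omega⟩
  rw [Gdn_eq_mersenneMultichooseConv, Gdn'_eq_sum_range_choose,
    mersenneMultichooseConv_eq_sum_range_choose]

/-- for all integers `n ≥ 2` and `d ≥ 2`, `G_{d,n} = G'_{d,n}`. -/
theorem stmt_1 (n d : ℤ) (hn : 2 ≤ n) (hd : 2 ≤ d) : Gdn d n = Gdn' d n :=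
  stmt_1_general n d hd
end

section
/- Let $R$ be a commutative ring, $P \in R[X]$ a monic polynomial of degree $n+1$, and let $\int: R[X]/(P) \to R$ be the $R$-linear map sending the class of a polynomial $f$ to the coefficient of $X^n$ in the unique representative $\tilde f$ of degree $\le n$. Then for any $f \in R[X]$ and any $t \in R$, $\int \left( \frac{P(X)-P(t)}{X-t} \cdot f(X) \right) = \tilde f(t)$, where $\frac{P(X)-P(t)}{X-t}$ denotes the polynomial quotient of $P(X) - P(t)$ by $X - t$ in $R[X]$ (which exists since $X - t$ divides $P(X)-P(t)$). -/
/-!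
Write `Q_p = (p(X) - p(t)) / (X - t)`. Comparing `(X - t) Q_P = P - P(t)` and
`(X - t) Q_g = g - g(t)` gives `Q_P g = P Q_g + (g(t) Q_P - P(t) Q_g)`. When `deg g ≤ n` the last
summand has degree `≤ n`, so it is the remainder of `Q_P g` modulo `P`; its `Xⁿ`-coefficient is
`g(t) · 1 - P(t) · 0`, because `Q_P` is monic of degree `n` and `deg Q_g < n`.
-/

open Polynomial Finset

namespace Polynomial

variable {R : Type*} [CommRing R]

noncomputable def divDiff (p : R[X]) (t : R) : R[X] :=
  (p - C (p.eval t)) /ₘ (X - C t)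

theorem X_sub_C_mul_divDiff (p : R[X]) (t : R) :
    (X - C t) * divDiff p t = p - C (p.eval t) :=
  mul_divByMonic_eq_iff_isRoot.2 (by simp)

theorem natDegree_divDiff [Nontrivial R] (p : R[X]) (t : R) :
    (divDiff p t).natDegree = p.natDegree - 1 := by
  rw [divDiff, natDegree_divByMonic _ (monic_X_sub_C t), natDegree_sub_C, natDegree_X_sub_C]

theorem coeff_divDiff (p : R[X]) (t : R) (n : ℕ) :
    (divDiff p t).coeff n = ∑ i ∈ Icc (n + 1) p.natDegree, t ^ (i - (n + 1)) * p.coeff i := by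
  rw [divDiff, coeff_divByMonic_X_sub_C, natDegree_sub_C]
  refine sum_congr rfl fun i hi => ?_
  rw [coeff_sub, coeff_C, if_neg (by grind), sub_zero]

theorem coeff_divDiff_of_natDegree_le {p : R[X]} {n : ℕ} (h : p.natDegree ≤ n) (t : R) :
    (divDiff p t).coeff n = 0 := by
  rw [coeff_divDiff, Icc_eq_empty (by omega), sum_empty]

theorem coeff_divDiff_of_natDegree_eq_succ {p : R[X]} {n : ℕ} (h : p.natDegree = n + 1)
    (t : R) : (divDiff p t).coeff n = p.leadingCoeff := by
  rw [coeff_divDiff, h, Icc_self, sum_singleton, Nat.sub_self, pow_zero, one_mul, leadingCoeff, h]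

theorem divDiff_mul_eq (p q : R[X]) (t : R) :
    divDiff p t * q =
      p * divDiff q t + (C (q.eval t) * divDiff p t - C (p.eval t) * divDiff q t) := by
  linear_combination divDiff q t * X_sub_C_mul_divDiff p t - divDiff p t * X_sub_C_mul_divDiff q t

theorem divDiff_mul_modByMonic {P q : R[X]} (hP : P.Monic) (hq : q.natDegree < P.natDegree)
    (t : R) :
    (divDiff P t * q) %ₘ P = C (q.eval t) * divDiff P t - C (P.eval t) * divDiff q t := by
  nontriviality R
  have hdeg :
      (C (q.eval t) * divDiff P t - C (P.eval t) * divDiff q t).natDegree < P.natDegree := by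
    refine lt_of_le_of_lt
      (natDegree_sub_le_of_le (natDegree_C_mul_le _ _) (natDegree_C_mul_le _ _)) ?_
    rw [natDegree_divDiff, natDegree_divDiff]
    omega
  rw [divDiff_mul_eq, add_modByMonic, self_mul_modByMonic hP, zero_add,
    (modByMonic_eq_self_iff hP).2 (degree_lt_degree hdeg)]

theorem mul_modByMonic_right {P : R[X]} (hP : P.Monic) (p q : R[X]) :
    (p * (q %ₘ P)) %ₘ P = (p * q) %ₘ P :=
  modByMonic_eq_of_dvd_sub hP <| by
    rw [← mul_sub]
    exact (dvd_modByMonic_sub q P).mul_left p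

end Polynomial

/-- for a monic `P` of degree `n+1` over a commutative ring `R`, the
"integral" map sending (the class of) `f` to the `Xⁿ`-coefficient of its degree-`≤ n`
representative `f %ₘ P` satisfies `∫ ((P(X)-P(t))/(X-t) · f) = f̃(t)`. -/
theorem stmt_3 {R : Type*} [CommRing R] (n : ℕ) (P : R[X]) (hP : P.Monic)
    (hdeg : P.natDegree = n + 1) (f : R[X]) (t : R) :
    ((((P - C (P.eval t)) /ₘ (X - C t)) * f) %ₘ P).coeff n = (f %ₘ P).eval t := by
  have hP1 : P ≠ 1 := by
    rintro rfl
    simp at hdeg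
  have hrem : (f %ₘ P).natDegree < P.natDegree := natDegree_modByMonic_lt f hP hP1
  change ((divDiff P t * f) %ₘ P).coeff n = _
  rw [← mul_modByMonic_right hP, divDiff_mul_modByMonic hP hrem, coeff_sub, coeff_C_mul,
    coeff_C_mul, coeff_divDiff_of_natDegree_eq_succ hdeg, hP.leadingCoeff,
    coeff_divDiff_of_natDegree_le (by omega), mul_one, mul_zero, sub_zero]
end

section
/- For a fixed integer $c \ge 0$ and $n > c$, the polynomials $(z^a - 1)(z^b - 1)(z-1)^c$ with $a \ge b \ge 1$ and $a + b + c = n$ are linearly independent over $\mathbb{Q}$ in $\mathbb{Q}[z]$, and there are exactly $\lfloor (n-c)/2 \rfloor$ of them. -/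
open Polynomial

/-- for fixed `c ≥ 0` and `n > c`, the polynomials
`(z^a-1)(z^b-1)(z-1)^c` indexed by pairs `(a,b)` with `a ≥ b ≥ 1` and `a + b + c = n`
are linearly independent over `ℚ`, and there are exactly `⌊(n-c)/2⌋` of them. -/
theorem stmt_5 (c n : ℕ) (hn : c < n) :
    ((Finset.range (n + 1) ×ˢ Finset.range (n + 1)).filter
        (fun p => 1 ≤ p.2 ∧ p.2 ≤ p.1 ∧ p.1 + p.2 + c = n)).card = (n - c) / 2 ∧
    LinearIndependent ℚ
      (fun p : ((Finset.range (n + 1) ×ˢ Finset.range (n + 1)).filter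
          (fun p => 1 ≤ p.2 ∧ p.2 ≤ p.1 ∧ p.1 + p.2 + c = n)) =>
        ((X : ℚ[X]) ^ (p : ℕ × ℕ).1 - 1) * (X ^ (p : ℕ × ℕ).2 - 1) * (X - 1) ^ c) := by
  set m := n - c with hm
  set S := (Finset.range (n + 1) ×ˢ Finset.range (n + 1)).filter
      (fun p => 1 ≤ p.2 ∧ p.2 ≤ p.1 ∧ p.1 + p.2 + c = n) with hS
  have hmem : ∀ p : ℕ × ℕ, p ∈ S ↔ 1 ≤ p.2 ∧ p.2 ≤ p.1 ∧ p.1 + p.2 = m := by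
    intro p
    simp only [hS, Finset.mem_filter, Finset.mem_product, Finset.mem_range]
    constructor
    · rintro ⟨⟨h1, h2⟩, h3, h4, h5⟩
      exact ⟨h3, h4, by omega⟩
    · rintro ⟨h3, h4, h5⟩
      exact ⟨⟨by omega, by omega⟩, h3, h4, by omega⟩
  constructor
  · -- cardinality
    have : S.card = (Finset.Icc 1 (m / 2)).card := by
      apply Finset.card_bij' (fun p _ => p.2) (fun b _ => (m - b, b))
      · intro p hp
        rw [hmem] at hp
        simp only [Finset.mem_Icc]
        omega
      · intro b hb
        simp only [Finset.mem_Icc] at hb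
        rw [hmem]
        refine ⟨by omega, by omega, by omega⟩
      · intro p hp
        rw [hmem] at hp
        have : m - p.2 = p.1 := by omega
        simp [this]
      · intro b hb
        rfl
    rw [this, Nat.card_Icc]
    omega
  · -- linear independence
    rw [Fintype.linearIndependent_iff]
    intro g hg i
    have key : ∀ q : {x // x ∈ S}, 1 ≤ (q : ℕ × ℕ).2 ∧ (q : ℕ × ℕ).2 ≤ (q : ℕ × ℕ).1 ∧
        (q : ℕ × ℕ).1 + (q : ℕ × ℕ).2 = m := fun q => (hmem _).1 q.2
    -- factor out (X - 1)^c
    have hg' : (∑ q : {x // x ∈ S},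
        g q • (((X : ℚ[X]) ^ (q : ℕ × ℕ).1 - 1) * (X ^ (q : ℕ × ℕ).2 - 1))) * (X - 1) ^ c = 0 := by
      rw [Finset.sum_mul]
      rw [← hg]
      apply Finset.sum_congr rfl
      intro q _
      rw [smul_mul_assoc]
    have hXc : ((X : ℚ[X]) - 1) ^ c ≠ 0 := by
      apply pow_ne_zero
      intro h
      have := congrArg (fun f => Polynomial.coeff f 1) h
      simp [coeff_one] at this
    have hsum : (∑ q : {x // x ∈ S},
        g q • (((X : ℚ[X]) ^ (q : ℕ × ℕ).1 - 1) * (X ^ (q : ℕ × ℕ).2 - 1))) = 0 := by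
      rcases mul_eq_zero.1 hg' with h | h
      · exact h
      · exact absurd h hXc
    set k := (i : ℕ × ℕ).1 with hk
    have hc := congrArg (fun f => Polynomial.coeff f k) hsum
    simp only [finset_sum_coeff, coeff_smul, coeff_zero, smul_eq_mul] at hc
    have hcoeff : ∀ q : {x // x ∈ S},
        (((X : ℚ[X]) ^ (q : ℕ × ℕ).1 - 1) * (X ^ (q : ℕ × ℕ).2 - 1)).coeff k =
        (if k = (q : ℕ × ℕ).1 + (q : ℕ × ℕ).2 then 1 else 0)
          - (if k = (q : ℕ × ℕ).1 then 1 else 0)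
          - (if k = (q : ℕ × ℕ).2 then 1 else 0)
          + (if k = 0 then 1 else 0) := by
      intro q
      have hexp : ((X : ℚ[X]) ^ (q : ℕ × ℕ).1 - 1) * (X ^ (q : ℕ × ℕ).2 - 1) =
          X ^ ((q : ℕ × ℕ).1 + (q : ℕ × ℕ).2) - X ^ (q : ℕ × ℕ).1 - X ^ (q : ℕ × ℕ).2 + 1 := by
        rw [pow_add]; ring
      rw [hexp]
      simp [coeff_X_pow, coeff_one]
    obtain ⟨hi1, hi2, hi3⟩ := key i
    -- facts about k
    have hk1 : 1 ≤ k := le_trans hi1 hi2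
    have hk2 : k < m := by omega
    have hk3 : m ≤ 2 * k := by omega
    -- the sum reduces to the single term at i
    rw [Finset.sum_congr rfl (fun q _ => by rw [hcoeff q])] at hc
    rw [Finset.sum_eq_single i] at hc
    · rw [if_neg (show ¬ k = (i : ℕ × ℕ).1 + (i : ℕ × ℕ).2 by omega),
          if_pos hk, if_neg (show ¬ k = 0 by omega)] at hc
      by_cases hab : k = (i : ℕ × ℕ).2
      · rw [if_pos hab] at hc
        linarith
      · rw [if_neg hab] at hc
        linarith
    · intro q _ hq
      obtain ⟨h1, h2, h3⟩ := key q
      have hne1 : k ≠ (q : ℕ × ℕ).1 := by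
        intro h
        apply hq
        apply Subtype.ext
        exact Prod.ext_iff.mpr ⟨by omega, by omega⟩
      have hne2 : k ≠ (q : ℕ × ℕ).2 := by
        intro h
        apply hq
        apply Subtype.ext
        exact Prod.ext_iff.mpr ⟨by omega, by omega⟩
      rw [if_neg (by omega), if_neg hne1, if_neg hne2, if_neg (by omega)]
      ring
    · intro h
      exact absurd (Finset.mem_univ i) h
end

section
/- Let $d \ge 2$ and let $a_1, \ldots, a_d$ be positive integers with sum $n$, and define integers $\alpha_{k_1}$ by $-\frac{1}{(z-1)^{d-2}} \prod_{i=1}^d (z^{a_i}-1) = \sum_{0 \le k_1 \le k_2,\ k_1+k_2 = n-d+2} \alpha_{k_1}(z^{k_1} + z^{k_2})$. Then the polynomial identity $\prod_{i=1}^d (z^{a_i}-1) = \sum_{1 \le k_1 \le k_2,\ k_1+k_2 = n-d+2} \alpha_{k_1} (z^{k_1}-1)(z^{k_2}-1)(z-1)^{d-2}$ holds in $\mathbb{Q}[z]$. -/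
open Polynomial

/-- with `d ≥ 2`, `a_1,…,a_d` positive of sum `n`, and integers `α_{k₁}`
defined by `-(1/(z-1)^{d-2}) ∏ (z^{a_i}-1) = ∑_{0 ≤ k₁ ≤ k₂, k₁+k₂=n-d+2} α_{k₁}(z^{k₁}+z^{k₂})`,
we have `∏ (z^{a_i}-1) = ∑_{1 ≤ k₁ ≤ k₂, k₁+k₂=n-d+2} α_{k₁}(z^{k₁}-1)(z^{k₂}-1)(z-1)^{d-2}`
in `ℚ[z]`. -/
theorem stmt_7 (d : ℕ) (hd : 2 ≤ d) (a : Fin d → ℕ) (ha : ∀ i, 0 < a i)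
    (n : ℕ) (hn : n = ∑ i, a i) (α : ℕ → ℤ)
    (hα : -(∏ i, ((X : ℚ[X]) ^ a i - 1))
      = (X - 1) ^ (d - 2) *
        ∑ k1 ∈ Finset.range ((n - d + 2) / 2 + 1),
          C ((α k1 : ℚ)) * (X ^ k1 + X ^ (n - d + 2 - k1))) :
    (∏ i, ((X : ℚ[X]) ^ a i - 1))
      = ∑ k1 ∈ Finset.Icc 1 ((n - d + 2) / 2),
          C ((α k1 : ℚ)) * (X ^ k1 - 1) * (X ^ (n - d + 2 - k1) - 1) * (X - 1) ^ (d - 2) := by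
  set m := n - d + 2 with hm
  set P : ℚ[X] := (X - 1) ^ (d - 2) with hP
  set G : ℚ[X] := ∏ i, ∑ j ∈ Finset.range (a i), X ^ j with hG
  have hX1 : ((X : ℚ[X]) - 1) ≠ 0 := by
    simpa using X_sub_C_ne_zero (1 : ℚ)
  have hPne : P ≠ 0 := pow_ne_zero _ hX1
  -- factor the product
  have hProdFac : (∏ i, ((X : ℚ[X]) ^ a i - 1)) = G * (X - 1) ^ d := by
    calc (∏ i, ((X : ℚ[X]) ^ a i - 1))
        = ∏ i, ((∑ j ∈ Finset.range (a i), X ^ j) * (X - 1)) :=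
          Finset.prod_congr rfl fun i _ => (geom_sum_mul X (a i)).symm
      _ = G * (X - 1) ^ d := by
          rw [Finset.prod_mul_distrib, Finset.prod_const, Finset.card_univ, Fintype.card_fin]
  have hdpow : ((X : ℚ[X]) - 1) ^ d = P * (X - 1) ^ 2 := by
    rw [hP, ← pow_add]
    congr 1
    omega
  -- cancel (X-1)^(d-2)
  have hScancel : (∑ k1 ∈ Finset.range (m / 2 + 1),
      C ((α k1 : ℚ)) * (X ^ k1 + X ^ (m - k1))) = -(G * (X - 1) ^ 2) := by
    apply mul_left_cancel₀ hPne
    rw [← hα, hProdFac, hdpow]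
    ring
  -- evaluate at 1
  have heval : (∑ k ∈ Finset.range (m / 2 + 1), (α k : ℚ)) = 0 := by
    have h := congrArg (eval 1) hScancel
    simp [eval_finset_sum, Finset.sum_mul] at h
    rw [← Finset.sum_mul] at h
    -- h : (∑ ...) * 2 = 0 roughly; massage
    simpa using h
  have hrange : Finset.range (m / 2 + 1) = insert 0 (Finset.Icc 1 (m / 2)) := by
    ext x
    simp only [Finset.mem_range, Finset.mem_insert, Finset.mem_Icc]
    omega
  have hzero : (0 : ℕ) ∉ Finset.Icc 1 (m / 2) := by simp
  have hA : (∑ k ∈ Finset.Icc 1 (m / 2), (α k : ℚ)) = -(α 0 : ℚ) := by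
    rw [hrange, Finset.sum_insert hzero] at heval
    linarith
  have hCA : (C (∑ k ∈ Finset.Icc 1 (m / 2), (α k : ℚ)) : ℚ[X]) = -C ((α 0 : ℚ)) := by
    rw [hA, map_neg]
  -- rewrite hα splitting off the k = 0 term
  have hα' : -(∏ i, ((X : ℚ[X]) ^ a i - 1))
      = P * (C ((α 0 : ℚ)) * (1 + X ^ m)
          + ∑ k ∈ Finset.Icc 1 (m / 2), C ((α k : ℚ)) * (X ^ k + X ^ (m - k))) := by
    rw [hα, hrange, Finset.sum_insert hzero, pow_zero, Nat.sub_zero]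
  -- main sum transformation
  have hsum1 : (∑ k1 ∈ Finset.Icc 1 (m / 2),
        C ((α k1 : ℚ)) * (X ^ k1 - 1) * (X ^ (m - k1) - 1) * P)
      = ((X ^ m + 1) * C (∑ k ∈ Finset.Icc 1 (m / 2), (α k : ℚ))
          - ∑ k ∈ Finset.Icc 1 (m / 2), C ((α k : ℚ)) * (X ^ k + X ^ (m - k))) * P := by
    calc (∑ k1 ∈ Finset.Icc 1 (m / 2),
          C ((α k1 : ℚ)) * (X ^ k1 - 1) * (X ^ (m - k1) - 1) * P)
        = ∑ k ∈ Finset.Icc 1 (m / 2),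
            ((X ^ m + 1) * C ((α k : ℚ)) * P - C ((α k : ℚ)) * (X ^ k + X ^ (m - k)) * P) := by
          refine Finset.sum_congr rfl fun k hk => ?_
          have hkm : k ≤ m := by
            have := Finset.mem_Icc.mp hk
            have := Nat.div_le_self m 2
            omega
          have hx : (X : ℚ[X]) ^ k * X ^ (m - k) = X ^ m := by
            rw [← pow_add, Nat.add_sub_cancel' hkm]
          linear_combination P * C ((α k : ℚ)) * hx
      _ = ((X ^ m + 1) * C (∑ k ∈ Finset.Icc 1 (m / 2), (α k : ℚ))
            - ∑ k ∈ Finset.Icc 1 (m / 2), C ((α k : ℚ)) * (X ^ k + X ^ (m - k))) * P := by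
          rw [Finset.sum_sub_distrib, ← Finset.sum_mul, ← Finset.sum_mul, ← Finset.mul_sum,
            map_sum]
          ring
  linear_combination (-1 : ℚ[X]) * hsum1 - hα' - ((X ^ m + 1) * P) * hCA
end

section
/- Call a partition $\lambda = a_1^{e_1}\cdots a_k^{e_k}$ of an even integer $n$ into $d = \sum e_i$ parts 'special' if all part sizes $a_i$ are odd, all multiplicities $e_i$ are even, and $\frac{d!}{e_1!\cdots e_k!}$ is odd. Suppose rational numbers $a_\lambda$, indexed by partitions $\lambda$ of $n$ into exactly $d$ parts, satisfy $\sum_\lambda a_\lambda \prod_{i=1}^{k(\lambda)} \frac{(z^{a_i}-1)^{e_i}}{e_i!} = 0$ in $\mathbb{Q}[z]$, and that all $a_\lambda$ are integers. Then $\sum_{\lambda \text{ special}} a_\lambda \equiv 0 \pmod 2$. -/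
/-!
Substitute `z = X + 1`. Since `z^a - 1 = X (1 + z + ⋯ + z^(a-1))`, the polynomial of a partition
with `d` parts is `X^d` times a polynomial with constant term `∏ a_i^{e_i} / e_i!`. Comparing
coefficients of `X^d` and multiplying by `d!` gives `∑ a_λ w_λ = 0` with the integer weights
`w_λ = d!/(e_1!⋯e_k!) · ∏ a_i^{e_i}` (`partWeight`), so it suffices that `w_λ` is odd exactly
when `λ` is special.
If `w_λ` is odd, all `a_i` are odd, hence `d ≡ n` is even; an odd `e_i` would then make
`binom(d, e_i)`, which divides the multinomial coefficient, even.
-/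

open Polynomial

open scoped Classical

/-- The multinomial coefficient `d!/(e_1! ⋯ e_k!)` of a partition with `d` parts,
where the `e_a` are the multiplicities of the distinct part sizes `a`. -/
def partMultinomial {n : ℕ} (lam : Nat.Partition n) : ℕ :=
  Nat.factorial lam.parts.card /
    ∏ a ∈ lam.parts.toFinset, Nat.factorial (lam.parts.count a)

/-- A partition of an even `n` into `d` parts is special if all part sizes are odd,
all multiplicities are even, and its multinomial coefficient `d!/(e_1!⋯e_k!)` is odd. -/
def IsSpecial {n : ℕ} (lam : Nat.Partition n) : Prop :=
  (∀ a ∈ lam.parts.toFinset, Odd a) ∧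
  (∀ a ∈ lam.parts.toFinset, Even (lam.parts.count a)) ∧
  Odd (partMultinomial lam)

/-- The polynomial `∏_i (z^{a_i}-1)^{e_i}/e_i!` attached to a partition
`λ = a_1^{e_1} ⋯ a_k^{e_k}`. -/
noncomputable def partPoly {n : ℕ} (lam : Nat.Partition n) : ℚ[X] :=
  ∏ a ∈ lam.parts.toFinset,
    C ((1 : ℚ) / Nat.factorial (lam.parts.count a)) * (X ^ a - 1) ^ lam.parts.count a

open Finset

open scoped Nat

lemma Nat.odd_prod_iff {ι : Type*} (s : Finset ι) (f : ι → ℕ) :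
    Odd (∏ i ∈ s, f i) ↔ ∀ i ∈ s, Odd (f i) := by
  induction s using Finset.induction_on with
  | empty => simp
  | insert _ _ h ih => rw [prod_insert h, Nat.odd_mul, ih, forall_mem_insert]

lemma Multiset.even_sum_iff_even_card {s : Multiset ℕ} (hs : ∀ a ∈ s, Odd a) :
    Even s.sum ↔ Even (Multiset.card s) := by
  induction s using Multiset.induction_on with
  | empty => simp
  | cons a s ih =>
    have ha : Odd a := hs a (Multiset.mem_cons_self a s)
    rw [Multiset.sum_cons, Multiset.card_cons, Nat.even_add, Nat.even_add_one,
      ih fun b hb => hs b (Multiset.mem_cons_of_mem hb)]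
    simp [Nat.not_even_iff_odd.mpr ha]

lemma Nat.two_dvd_choose_of_even_of_odd {d e : ℕ} (hd : Even d) (he : Odd e) :
    2 ∣ d.choose e := by
  obtain ⟨k, rfl⟩ : ∃ k, e = k + 1 := ⟨e - 1, by have := he.pos; omega⟩
  rcases d with _ | m
  · simp
  · have h := Nat.add_one_mul_choose_eq m k
    exact (Nat.coprime_two_left.mpr he).dvd_of_dvd_mul_right (h ▸ hd.two_dvd.mul_right _)

lemma Nat.choose_sum_dvd_multinomial {α : Type*} [DecidableEq α] {s : Finset α} (f : α → ℕ)
    {a : α} (ha : a ∈ s) : (∑ i ∈ s, f i).choose (f a) ∣ Nat.multinomial s f := by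
  have h := Nat.multinomial_insert (notMem_erase a s) f
  rw [insert_erase ha, add_sum_erase s f ha] at h
  exact Dvd.intro _ h.symm

lemma Int.two_dvd_sum_filter_odd {ι : Type*} (s : Finset ι) (f : ι → ℤ) (w : ι → ℕ)
    (h : 2 ∣ ∑ i ∈ s, f i * w i) : 2 ∣ ∑ i ∈ s with Odd (w i), f i := by
  rw [← even_iff_two_dvd, ← ZMod.intCast_eq_zero_iff_even] at h ⊢
  push_cast at h ⊢
  rw [sum_filter]
  refine (sum_congr rfl fun i _ => ?_).trans h
  by_cases hw : Odd (w i)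
  · simp [hw, ZMod.natCast_eq_one_iff_odd.mpr hw]
  · simp [hw, ZMod.natCast_eq_zero_iff_even.mpr (Nat.not_odd_iff_even.mp hw)]

lemma comp_X_add_one_pow_sub_one {R : Type*} [CommRing R] (a e : ℕ) :
    (((X : R[X]) ^ a - 1) ^ e).comp (X + 1) = X ^ e * (∑ i ∈ range a, (X + 1) ^ i) ^ e := by
  rw [pow_comp, sub_comp, pow_comp, X_comp, one_comp, ← geom_sum_mul, add_sub_cancel_right,
    mul_pow, mul_comm]

section Partition

variable {n : ℕ} (lam : Nat.Partition n)

lemma partMultinomial_eq_multinomial :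
    partMultinomial lam = Nat.multinomial lam.parts.toFinset lam.parts.count := by
  rw [partMultinomial, Nat.multinomial, Multiset.toFinset_sum_count_eq]

def partWeight : ℕ :=
  partMultinomial lam * ∏ a ∈ lam.parts.toFinset, a ^ lam.parts.count a

lemma odd_partWeight_iff (hn : Even n) : Odd (partWeight lam) ↔ IsSpecial lam := by
  rw [partWeight, Nat.odd_mul, Nat.odd_prod_iff]
  constructor
  · rintro ⟨hmult, hpow⟩
    have hodd : ∀ a ∈ lam.parts.toFinset, Odd a := fun a ha =>
      (Nat.odd_pow_iff (Multiset.count_ne_zero.mpr (Multiset.mem_toFinset.mp ha))).mp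
        (hpow a ha)
    have hcard : Even (Multiset.card lam.parts) :=
      (Multiset.even_sum_iff_even_card fun a ha => hodd a (Multiset.mem_toFinset.mpr ha)).mp
        (by rwa [lam.parts_sum])
    refine ⟨hodd, fun a ha => ?_, hmult⟩
    by_contra he
    have hdvd : 2 ∣ partMultinomial lam := by
      refine (Nat.two_dvd_choose_of_even_of_odd hcard (Nat.not_even_iff_odd.mp he)).trans ?_
      rw [partMultinomial_eq_multinomial, ← Multiset.toFinset_sum_count_eq lam.parts]
      exact Nat.choose_sum_dvd_multinomial _ ha
    exact Nat.not_even_iff_odd.mpr hmult (even_iff_two_dvd.mpr hdvd)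
  · rintro ⟨hodd, -, hmult⟩
    exact ⟨hmult, fun a ha => (hodd a ha).pow⟩

lemma partPoly_comp_X_add_one :
    (partPoly lam).comp (X + 1) = X ^ Multiset.card lam.parts *
      ∏ a ∈ lam.parts.toFinset, C ((1 : ℚ) / (lam.parts.count a)!) *
        (∑ i ∈ range a, (X + 1) ^ i) ^ lam.parts.count a := by
  rw [partPoly, Polynomial.prod_comp, ← Multiset.toFinset_sum_count_eq lam.parts,
    ← prod_pow_eq_pow_sum, ← prod_mul_distrib]
  refine prod_congr rfl fun a _ => ?_
  rw [mul_comp, C_comp, comp_X_add_one_pow_sub_one]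
  ring

lemma coeff_card_partPoly_comp_X_add_one :
    ((partPoly lam).comp (X + 1)).coeff (Multiset.card lam.parts) =
      ∏ a ∈ lam.parts.toFinset, (a : ℚ) ^ lam.parts.count a / (lam.parts.count a)! := by
  rw [partPoly_comp_X_add_one, coeff_X_pow_mul', if_pos le_rfl, Nat.sub_self,
    coeff_zero_eq_eval_zero, eval_prod]
  refine prod_congr rfl fun a _ => ?_
  simp [eval_finsetSum, div_eq_inv_mul]

lemma factorial_card_mul_prod_eq_partWeight :
    ((Multiset.card lam.parts)! : ℚ) *
      ∏ a ∈ lam.parts.toFinset, (a : ℚ) ^ lam.parts.count a / (lam.parts.count a)! =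
        partWeight lam := by
  have hspec := Nat.multinomial_spec lam.parts.toFinset lam.parts.count
  rw [Multiset.toFinset_sum_count_eq, ← partMultinomial_eq_multinomial] at hspec
  have hfact : ∀ a ∈ lam.parts.toFinset, ((lam.parts.count a)! : ℚ) ≠ 0 :=
    fun a _ => by positivity
  rw [← hspec, partWeight, prod_div_distrib]
  push_cast
  field_simp [prod_ne_zero_iff.mpr hfact]

end Partition

lemma sum_mul_partWeight_eq_zero {n : ℕ} (d : ℕ) (coeff : Nat.Partition n → ℤ)
    (hrel : ∑ lam ∈ univ.filter (fun lam : Nat.Partition n => lam.parts.card = d),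
        C ((coeff lam : ℚ)) * partPoly lam = 0) :
    ∑ lam ∈ univ.filter (fun lam : Nat.Partition n => lam.parts.card = d),
      coeff lam * partWeight lam = 0 := by
  have h := congrArg (fun p : ℚ[X] => (d ! : ℚ) * (p.comp (X + 1)).coeff d) hrel
  simp only [Polynomial.sum_comp, mul_comp, C_comp, finsetSum_coeff, coeff_C_mul, mul_sum,
    zero_comp, coeff_zero, mul_zero] at h
  have hq : ∑ lam ∈ univ.filter (fun lam : Nat.Partition n => lam.parts.card = d),
      (coeff lam : ℚ) * partWeight lam = 0 := by
    rw [← h]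
    refine sum_congr rfl fun lam hlam => ?_
    obtain rfl := (mem_filter.mp hlam).2
    rw [coeff_card_partPoly_comp_X_add_one, ← factorial_card_mul_prod_eq_partWeight]
    ring
  exact_mod_cast hq

theorem stmt_10_general (n d : ℕ) (hn : Even n) (coeff : Nat.Partition n → ℤ)
    (hrel : ∑ lam ∈ Finset.univ.filter (fun lam : Nat.Partition n => lam.parts.card = d),
        C ((coeff lam : ℚ)) * partPoly lam = 0) :
    2 ∣ ∑ lam ∈ Finset.univ.filter
        (fun lam : Nat.Partition n => lam.parts.card = d ∧ IsSpecial lam), coeff lam := by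
  have hspecial : univ.filter (fun lam : Nat.Partition n => lam.parts.card = d ∧ IsSpecial lam) =
      (univ.filter fun lam : Nat.Partition n => lam.parts.card = d).filter
        fun lam => Odd (partWeight lam) := by
    rw [filter_filter]
    exact filter_congr fun lam _ => by rw [odd_partWeight_iff lam hn]
  rw [hspecial]
  apply Int.two_dvd_sum_filter_odd
  rw [sum_mul_partWeight_eq_zero d coeff hrel]
  exact dvd_zero 2

/-- if integers `a_λ`, indexed by the partitions of an even `n` into `d`
parts, satisfy `∑_λ a_λ ∏ (z^{a_i}-1)^{e_i}/e_i! = 0` in `ℚ[z]`, then the sum of `a_λ`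
over the special partitions is even. -/
theorem stmt_10 (n d : ℕ) (hn : Even n) (hn0 : 0 < n) (coeff : Nat.Partition n → ℤ)
    (hrel : ∑ lam ∈ Finset.univ.filter (fun lam : Nat.Partition n => lam.parts.card = d),
        C ((coeff lam : ℚ)) * partPoly lam = 0) :
    2 ∣ ∑ lam ∈ Finset.univ.filter
        (fun lam : Nat.Partition n => lam.parts.card = d ∧ IsSpecial lam), coeff lam :=
  stmt_10_general n d hn coeff hrel
end

section
/- Let $n \ge 3$ and let $R$ be the commutative ring generated over $\mathbb{Z}$ by symbols $\Delta_{i,j}$ for $1 \le i < j \le n$ (with $\Delta_{j,i} := \Delta_{i,j}$), modulo the square relations $\Delta_{i,j} + \Delta_{k,l} = \Delta_{i,k} + \Delta_{j,l}$ for distinct $i,j,k,l$ and the diagonal relations $\Delta_{i,j}\Delta_{i,k} = \Delta_{i,j}\Delta_{j,k}$ for distinct $i,j,k$. For a partition $P$ of $[n]$, and any forest $T$ on vertex set $[n]$ consisting of one spanning tree for each part of $P$, define $\Delta_P = \prod_{\{i,j\} \in \mathrm{Edge}(T)} \Delta_{i,j}$. Then $\Delta_P$ is independent of the choice of the forest $T$.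 -/
open MvPolynomial

/-- The relations defining the ring `R`: symmetry `Δ_{i,j} = Δ_{j,i}`, the square
relations `Δ_{i,j}+Δ_{k,l} = Δ_{i,k}+Δ_{j,l}` for distinct `i,j,k,l`, and the diagonal
relations `Δ_{i,j}Δ_{i,k} = Δ_{i,j}Δ_{j,k}` for distinct `i,j,k`. -/
def deltaRels (n : ℕ) : Set (MvPolynomial (Fin n × Fin n) ℤ) :=
  {x | ∃ i j : Fin n, x = X (i, j) - X (j, i)} ∪
  {x | ∃ i j k l : Fin n, i ≠ j ∧ i ≠ k ∧ i ≠ l ∧ j ≠ k ∧ j ≠ l ∧ k ≠ l ∧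
    x = X (i, j) + X (k, l) - X (i, k) - X (j, l)} ∪
  {x | ∃ i j k : Fin n, i ≠ j ∧ i ≠ k ∧ j ≠ k ∧
    x = X (i, j) * X (i, k) - X (i, j) * X (j, k)}

/-- The ring `R(n)` generated by the `Δ_{i,j}` modulo the square and diagonal
relations. -/
abbrev DeltaRing (n : ℕ) :=
  MvPolynomial (Fin n × Fin n) ℤ ⧸ Ideal.span (deltaRels n)

/-- The class `Δ_{i,j} ∈ R(n)`. -/
noncomputable def delta {n : ℕ} (i j : Fin n) : DeltaRing n :=
  Ideal.Quotient.mk _ (X (i, j))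

/-- `E` is (the edge set of) a forest on vertex set `Fin n` consisting of one spanning
tree for each part of the partition `P`: the edges are loop-free and pairwise distinct
as unordered pairs, the resulting graph is acyclic, and two vertices are connected in it
exactly when they lie in a common part of `P`. -/
def IsSpanningForestFor {n : ℕ} (P : Finset (Finset (Fin n)))
    (E : Finset (Fin n × Fin n)) : Prop :=
  (∀ p ∈ E, p.1 ≠ p.2) ∧
  (∀ p ∈ E, ∀ q ∈ E, (s(p.1, p.2) : Sym2 (Fin n)) = s(q.1, q.2) → p = q) ∧
  (SimpleGraph.fromEdgeSet {e : Sym2 (Fin n) | ∃ p ∈ E, e = s(p.1, p.2)}).IsAcyclic ∧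
  (∀ i j : Fin n,
    (SimpleGraph.fromEdgeSet {e : Sym2 (Fin n) | ∃ p ∈ E, e = s(p.1, p.2)}).Reachable i j
      ↔ ∃ A ∈ P, i ∈ A ∧ j ∈ A)


/-! The diagonal relation `Δ_{ij} Δ_{ik} = Δ_{ij} Δ_{jk}` lets an edge `jk` slide along an
adjacent edge `ij` to `ik`. Sliding edges towards a fixed vertex `c` turns the product over
any spanning tree of a part `A` into the star `∏_{w ∈ A \ {c}} Δ_{c,w}`, and this star does
not depend on `c`. Hence the product over a forest is determined by its connected
components: rooting each component at its least vertex, adding an edge between two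
components multiplies the product of the stars by exactly that edge. -/

namespace DeltaForest

open SimpleGraph Finset

variable {V M : Type*} [CommMonoid M]

structure HasDiagonalRelations (d : V → V → M) : Prop where
  symm : ∀ i j, d i j = d j i
  slide : ∀ {i j k}, i ≠ j → i ≠ k → j ≠ k → d i j * d i k = d i j * d j k

theorem hasDiagonalRelations_delta (n : ℕ) :
    HasDiagonalRelations (delta : Fin n → Fin n → DeltaRing n) where
  symm i j := Ideal.Quotient.eq.2 <| Ideal.subset_span <| .inl <| .inl ⟨i, j, rfl⟩
  slide {i j k} hij hik hjk := by
    simp only [delta, ← map_mul]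
    exact Ideal.Quotient.eq.2 <| Ideal.subset_span <| .inr ⟨i, j, k, hij, hik, hjk, rfl⟩

section Star

variable [DecidableEq V] {d : V → V → M}

def starProd (d : V → V → M) (S : Finset V) (c : V) : M :=
  ∏ w ∈ S.erase c, d c w

theorem HasDiagonalRelations.mul_prod_eq_mul_prod (hd : HasDiagonalRelations d)
    {b c : V} (hbc : b ≠ c) {s : Finset V} (hb : b ∉ s) (hc : c ∉ s) :
    d b c * ∏ w ∈ s, d b w = d b c * ∏ w ∈ s, d c w := by
  induction s using Finset.induction_on with
  | empty => rfl
  | insert a s ha ih =>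
    rw [mem_insert, not_or] at hb hc
    rw [prod_insert ha, prod_insert ha, mul_left_comm, ih hb.2 hc.2, ← mul_assoc,
      mul_comm (d b a), hd.slide hbc hb.1 hc.1, mul_assoc]

theorem HasDiagonalRelations.starProd_eq (hd : HasDiagonalRelations d) {S : Finset V}
    {b c : V} (hb : b ∈ S) (hc : c ∈ S) : starProd d S b = starProd d S c := by
  obtain rfl | hbc := eq_or_ne b c
  · rfl
  calc starProd d S b = d b c * ∏ w ∈ (S.erase b).erase c, d b w :=
        (mul_prod_erase _ _ (mem_erase.2 ⟨hbc.symm, hc⟩)).symm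
    _ = d c b * ∏ w ∈ (S.erase c).erase b, d c w := by
        rw [hd.mul_prod_eq_mul_prod hbc (by simp) (by simp), hd.symm, erase_right_comm]
    _ = starProd d S c := mul_prod_erase _ _ (mem_erase.2 ⟨hbc, hb⟩)

theorem HasDiagonalRelations.mul_starProd_mul_starProd (hd : HasDiagonalRelations d)
    {A B : Finset V} (hAB : Disjoint A B) {u v : V} (hu : u ∈ A) (hv : v ∈ B) :
    d u v * starProd d A u * starProd d B v = starProd d (A ∪ B) u := by
  have huB : u ∉ B := disjoint_left.1 hAB hu
  have hvu : v ≠ u := ne_of_mem_of_not_mem hv huB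
  have hedge : d u v * starProd d B v = ∏ w ∈ B, d u w := by
    rw [starProd, hd.symm,
      hd.mul_prod_eq_mul_prod hvu (by simp) (fun h => huB (mem_of_mem_erase h)), hd.symm,
      mul_prod_erase _ _ hv]
  rw [mul_comm (d u v), mul_assoc, hedge, starProd, starProd, erase_union_distrib,
    erase_eq_of_notMem huB, prod_union (disjoint_of_subset_left (erase_subset _ _) hAB)]

end Star

section Graph

variable {G H : SimpleGraph V} {u v w : V}

theorem reachable_sup_edge_iff {a b : V} :
    (G ⊔ edge u v).Reachable a b ↔ G.Reachable a b ∨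
      (G.Reachable a u ∧ G.Reachable v b) ∨ (G.Reachable a v ∧ G.Reachable u b) := by
  constructor
  · rintro ⟨p⟩
    induction p with
    | nil => exact .inl .rfl
    | cons hxy _ ih =>
      rw [sup_adj, edge_adj] at hxy
      rcases hxy with hxy | ⟨⟨rfl, rfl⟩ | ⟨rfl, rfl⟩, -⟩
      · exact ih.imp (hxy.reachable.trans ·) (Or.imp (.imp_left (hxy.reachable.trans ·))
          (.imp_left (hxy.reachable.trans ·)))
      · rcases ih with h | ⟨-, h⟩ | ⟨-, h⟩
        exacts [.inr (.inl ⟨.rfl, h⟩), .inr (.inl ⟨.rfl, h⟩), .inl h]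
      · rcases ih with h | ⟨-, h⟩ | ⟨-, h⟩
        exacts [.inr (.inr ⟨.rfl, h⟩), .inl h, .inr (.inr ⟨.rfl, h⟩)]
  · have huv : (G ⊔ edge u v).Reachable u v := by
      obtain rfl | huv := eq_or_ne u v
      · rfl
      exact Adj.reachable (by simp [edge_adj, huv])
    rintro (h | ⟨h₁, h₂⟩ | ⟨h₁, h₂⟩)
    · exact h.mono le_sup_left
    · exact ((h₁.mono le_sup_left).trans huv).trans (h₂.mono le_sup_left)
    · exact ((h₁.mono le_sup_left).trans huv.symm).trans (h₂.mono le_sup_left)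

def edgeGraph (E : Finset (V × V)) : SimpleGraph V :=
  fromEdgeSet {e | ∃ p ∈ E, e = s(p.1, p.2)}

theorem edgeGraph_empty : edgeGraph (∅ : Finset (V × V)) = ⊥ := by
  simp [edgeGraph]

theorem edgeGraph_insert [DecidableEq V] (p : V × V) (E : Finset (V × V)) :
    edgeGraph (insert p E) = edgeGraph E ⊔ edge p.1 p.2 := by
  ext a b
  simp only [edgeGraph, sup_adj, edge_adj, fromEdgeSet_adj, exists_mem_insert]
  grind [Sym2.eq_iff]

variable [Fintype V] [LinearOrder V] {d : V → V → M}

open scoped Classical in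
noncomputable def component (G : SimpleGraph V) (v : V) : Finset V :=
  {u | G.Reachable u v}

theorem mem_component : u ∈ component G v ↔ G.Reachable u v := by
  simp [component]

theorem component_eq_of_reachable (h : G.Reachable v w) : component G v = component G w := by
  ext u
  simp only [mem_component]
  exact ⟨(·.trans h), (·.trans h.symm)⟩

theorem component_sup_edge : component (G ⊔ edge u v) u = component G u ∪ component G v := by
  ext a
  simp only [mem_component, mem_union, reachable_sup_edge_iff]
  grind [Reachable.refl]

theorem component_sup_edge_of_notMem (hw : w ∉ component G u ∪ component G v) :
    component (G ⊔ edge u v) w = component G w := by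
  simp only [mem_union, mem_component, not_or] at hw
  ext a
  simp only [mem_component, reachable_sup_edge_iff]
  grind [Reachable.symm]

noncomputable def root (G : SimpleGraph V) (v : V) : V :=
  (component G v).min' ⟨v, mem_component.2 .rfl⟩

theorem root_mem_component : root G v ∈ component G v := min'_mem _ _

theorem root_congr (h : component G v = component H w) : root G v = root H w := by
  unfold root
  congr 1

noncomputable def rootFactor (d : V → V → M) (G : SimpleGraph V) (w : V) : M :=
  if root G w = w then 1 else d (root G w) w

noncomputable def rootedProd (d : V → V → M) (G : SimpleGraph V) : M :=
  ∏ w, rootFactor d G w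

theorem rootedProd_congr (h : G.Reachable = H.Reachable) : rootedProd d G = rootedProd d H := by
  have hcomp (w : V) : component G w = component H w := by ext; simp [mem_component, h]
  simp only [rootedProd, rootFactor, root_congr (hcomp _)]

theorem rootedProd_bot : rootedProd d (⊥ : SimpleGraph V) = 1 := by
  refine prod_eq_one fun w _ => if_pos ?_
  simpa [mem_component, reachable_bot] using (root_mem_component : root ⊥ w ∈ component ⊥ w)

theorem HasDiagonalRelations.prod_rootFactor_component (hd : HasDiagonalRelations d)
    (G : SimpleGraph V) (c : V) :
    ∏ w ∈ component G c, rootFactor d G w = starProd d (component G c) c := by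
  have hroot : ∀ w ∈ component G c, root G w = root G c := fun w hw =>
    root_congr (component_eq_of_reachable (mem_component.1 hw))
  rw [← hd.starProd_eq root_mem_component (mem_component.2 .rfl), starProd,
    ← mul_prod_erase _ _ root_mem_component, rootFactor, hroot _ root_mem_component, if_pos rfl,
    one_mul]
  refine prod_congr rfl fun w hw => ?_
  rw [rootFactor, hroot w (mem_of_mem_erase hw), if_neg (ne_of_mem_erase hw).symm]

theorem HasDiagonalRelations.rootedProd_sup_edge (hd : HasDiagonalRelations d)
    (huv : ¬G.Reachable u v) : rootedProd d (G ⊔ edge u v) = d u v * rootedProd d G := by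
  set A := component G u
  set B := component G v
  have hAB : Disjoint A B := disjoint_left.2 fun x hxu hxv =>
    huv ((mem_component.1 hxu).symm.trans (mem_component.1 hxv))
  have hout :
      ∏ w ∈ (A ∪ B)ᶜ, rootFactor d (G ⊔ edge u v) w = ∏ w ∈ (A ∪ B)ᶜ, rootFactor d G w :=
    prod_congr rfl fun w hw => by
      rw [rootFactor, rootFactor, root_congr (component_sup_edge_of_notMem (mem_compl.1 hw))]
  calc rootedProd d (G ⊔ edge u v)
      = starProd d (A ∪ B) u * ∏ w ∈ (A ∪ B)ᶜ, rootFactor d G w := by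
        rw [rootedProd, ← prod_mul_prod_compl (A ∪ B), hout, ← component_sup_edge,
          hd.prod_rootFactor_component]
    _ = d u v * ((∏ w ∈ A, rootFactor d G w) * (∏ w ∈ B, rootFactor d G w)
          * ∏ w ∈ (A ∪ B)ᶜ, rootFactor d G w) := by
        rw [hd.prod_rootFactor_component, hd.prod_rootFactor_component,
          ← hd.mul_starProd_mul_starProd hAB (mem_component.2 .rfl) (mem_component.2 .rfl)]
        simp only [mul_assoc]
        rfl
    _ = d u v * rootedProd d G := by
        rw [← prod_union hAB, prod_mul_prod_compl, rootedProd]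

theorem HasDiagonalRelations.prod_eq_rootedProd (hd : HasDiagonalRelations d)
    {E : Finset (V × V)} (hloop : ∀ p ∈ E, p.1 ≠ p.2)
    (hinj : Set.InjOn (fun p : V × V => s(p.1, p.2)) E) (hE : (edgeGraph E).IsAcyclic) :
    ∏ p ∈ E, d p.1 p.2 = rootedProd d (edgeGraph E) := by
  induction E using Finset.induction_on with
  | empty => rw [prod_empty, edgeGraph_empty, rootedProd_bot]
  | insert p E hp ih =>
    rw [edgeGraph_insert] at hE ⊢
    have hnadj : ¬(edgeGraph E).Adj p.1 p.2 := by
      rintro ⟨⟨q, hq, hpq⟩, -⟩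
      exact hp (hinj (mem_insert_self p E) (mem_insert_of_mem hq) hpq ▸ hq)
    have hnreach : ¬(edgeGraph E).Reachable p.1 p.2 := fun h =>
      ((isAcyclic_sup_fromEdgeSet_iff.1 hE).2 h).elim (hloop p (mem_insert_self p E)) hnadj
    rw [prod_insert hp, hd.rootedProd_sup_edge hnreach,
      ih (fun q hq => hloop q (mem_insert_of_mem hq)) (hinj.mono (by simp))
        (hE.anti le_sup_left)]

end Graph

end DeltaForest

theorem stmt_14_general (n : ℕ) (P : Finset (Finset (Fin n)))
    (E₁ E₂ : Finset (Fin n × Fin n))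
    (h₁ : IsSpanningForestFor P E₁) (h₂ : IsSpanningForestFor P E₂) :
    ∏ p ∈ E₁, delta p.1 p.2 = ∏ p ∈ E₂, delta p.1 p.2 := by
  obtain ⟨hloop₁, hinj₁, hacyc₁, hreach₁⟩ := h₁
  obtain ⟨hloop₂, hinj₂, hacyc₂, hreach₂⟩ := h₂
  have hd := DeltaForest.hasDiagonalRelations_delta n
  rw [hd.prod_eq_rootedProd hloop₁ hinj₁ hacyc₁, hd.prod_eq_rootedProd hloop₂ hinj₂ hacyc₂]
  exact DeltaForest.rootedProd_congr (by ext i j; exact (hreach₁ i j).trans (hreach₂ i j).symm)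

/-- for a partition `P` of `{1,…,n}` (`n ≥ 3`), the class
`Δ_P = ∏_{{i,j} ∈ Edge(T)} Δ_{i,j} ∈ R(n)` is independent of the choice of the forest
`T` consisting of one spanning tree per part of `P`. -/
theorem stmt_14 (n : ℕ) (hn : 3 ≤ n) (P : Finset (Finset (Fin n)))
    (hP : IsPartitionOf n P) (E₁ E₂ : Finset (Fin n × Fin n))
    (h₁ : IsSpanningForestFor P E₁) (h₂ : IsSpanningForestFor P E₂) :
    ∏ p ∈ E₁, delta p.1 p.2 = ∏ p ∈ E₂, delta p.1 p.2 :=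
  stmt_14_general n P E₁ E₂ h₁ h₂
end

section
/- Let $b \ge 1$ and work in the ring $S = \mathbb{Q}[u,v][H_2',\ldots,H_{b+1}']/(H_i'^2 - \tfrac14 (u-v)^2)$. Then for every $j \ge 0$, the elementary symmetric polynomial $e_j(H_2',\ldots,H_{b+1}')$ lies in the $\mathbb{Q}$-linear span of the elements $(u-v)^{2k}(H_2' + \cdots + H_{b+1}')^\ell$ for $k, \ell \ge 0$. In particular, the following recurrence holds in $S$: $e_j \cdot (H_2'+\cdots+H_{b+1}') = (j+1) e_{j+1} + \tfrac14 (u-v)^2 (b - j + 1) e_{j-1}$, where $e_j = e_j(H_2',\ldots,H_{b+1}')$ and $e_{-1} = 0$. -/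
open MvPolynomial

/-- The ring `S = ℚ[u,v][H₂',…,H_{b+1}']/(Hᵢ'² - ¼(u-v)²)`, with `u = X (inr 0)`,
`v = X (inr 1)` and the `b` variables `Hᵢ' = X (inl i)`. -/
abbrev Sring (b : ℕ) :=
  MvPolynomial (Fin b ⊕ Fin 2) ℚ ⧸
    Ideal.span {x : MvPolynomial (Fin b ⊕ Fin 2) ℚ | ∃ i : Fin b,
      x = X (Sum.inl i) ^ 2 - C (1 / 4 : ℚ) * (X (Sum.inr 0) - X (Sum.inr 1)) ^ 2}

/-- The class of the `j`-th elementary symmetric polynomial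
`e_j(H₂',…,H_{b+1}')` in `S`. -/
noncomputable def esym (b j : ℕ) : Sring b :=
  Ideal.Quotient.mk _
    (∑ A ∈ Finset.powersetCard j (Finset.univ : Finset (Fin b)),
      ∏ i ∈ A, X (Sum.inl i))

/-- The class of `H₂' + ⋯ + H_{b+1}'` in `S`. -/
noncomputable def sumH (b : ℕ) : Sring b :=
  Ideal.Quotient.mk _ (∑ i : Fin b, X (Sum.inl i))

/-- The class of `(u-v)²` in `S`. -/
noncomputable def uv2 (b : ℕ) : Sring b :=
  Ideal.Quotient.mk _ ((X (Sum.inr 0) - X (Sum.inr 1)) ^ 2)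

section Aux

open Finset

private lemma stmt18_reidx {R : Type*} [CommRing R] {n j : ℕ} (f g : Fin n → R) :
    ∑ A ∈ powersetCard (j+1) (univ : Finset (Fin n)), ∑ i ∈ A, g i * ∏ a ∈ A.erase i, f a
    = ∑ B ∈ powersetCard j (univ : Finset (Fin n)), ∑ i ∈ Bᶜ, g i * ∏ a ∈ B, f a := by
  rw [Finset.sum_sigma', Finset.sum_sigma']
  apply Finset.sum_nbij' (fun p => ⟨p.1.erase p.2, p.2⟩) (fun p => ⟨insert p.2 p.1, p.2⟩)
  · rintro ⟨A, i⟩ h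
    simp only [Finset.mem_sigma, Finset.mem_powersetCard_univ] at h ⊢
    obtain ⟨hA, hi⟩ := h
    constructor
    · simp [Finset.card_erase_of_mem hi, hA]
    · simp [hi]
  · rintro ⟨B, i⟩ h
    simp only [Finset.mem_sigma, Finset.mem_powersetCard_univ, Finset.mem_compl] at h ⊢
    obtain ⟨hB, hi⟩ := h
    constructor
    · rw [Finset.card_insert_of_notMem hi, hB]
    · simp
  · rintro ⟨A, i⟩ h
    simp only [Finset.mem_sigma, Finset.mem_powersetCard_univ] at h
    simp [Finset.insert_erase h.2]
  · rintro ⟨B, i⟩ h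
    simp only [Finset.mem_sigma, Finset.mem_powersetCard_univ, Finset.mem_compl] at h
    simp [Finset.erase_insert h.2]
  · rintro ⟨A, i⟩ h
    rfl

private lemma stmt18_main_id {R : Type*} [CommRing R] {n j : ℕ} (f : Fin n → R) :
    (∑ A ∈ powersetCard j (univ : Finset (Fin n)), ∏ a ∈ A, f a) * (∑ i, f i)
    = (j+1) • (∑ A ∈ powersetCard (j+1) (univ : Finset (Fin n)), ∏ a ∈ A, f a)
      + ∑ A ∈ powersetCard j (univ : Finset (Fin n)), ∑ i ∈ A, f i ^ 2 * ∏ a ∈ A.erase i, f a := by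
  rw [Finset.sum_mul]
  have step : ∀ A ∈ powersetCard j (univ : Finset (Fin n)),
      (∏ a ∈ A, f a) * (∑ i, f i)
      = (∑ i ∈ Aᶜ, f i * ∏ a ∈ A, f a) + ∑ i ∈ A, f i ^ 2 * ∏ a ∈ A.erase i, f a := by
    intro A hA
    rw [Finset.mul_sum, ← Finset.sum_add_sum_compl A (fun i => (∏ a ∈ A, f a) * f i), add_comm]
    congr 1
    · apply Finset.sum_congr rfl
      intro i hi
      ring
    · apply Finset.sum_congr rfl
      intro i hi
      rw [← Finset.mul_prod_erase A f hi]
      ring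
  rw [Finset.sum_congr rfl step, Finset.sum_add_distrib]
  congr 1
  rw [← stmt18_reidx (n := n) (j := j) f f]
  calc ∑ A ∈ powersetCard (j+1) (univ : Finset (Fin n)), ∑ i ∈ A, f i * ∏ a ∈ A.erase i, f a
      = ∑ A ∈ powersetCard (j+1) (univ : Finset (Fin n)), (j+1) • ∏ a ∈ A, f a := by
        apply Finset.sum_congr rfl
        intro A hA
        rw [Finset.mem_powersetCard_univ] at hA
        rw [Finset.sum_congr rfl (fun i hi => Finset.mul_prod_erase A f hi),
          Finset.sum_const, hA]
    _ = _ := by rw [← Finset.smul_sum]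

noncomputable abbrev stmt18_Irel (b : ℕ) : Ideal (MvPolynomial (Fin b ⊕ Fin 2) ℚ) :=
  Ideal.span {x : MvPolynomial (Fin b ⊕ Fin 2) ℚ | ∃ i : Fin b,
      x = X (Sum.inl i) ^ 2 - C (1 / 4 : ℚ) * (X (Sum.inr 0) - X (Sum.inr 1)) ^ 2}

private lemma stmt18_smul_mk (b : ℕ) (q : ℚ) (p : MvPolynomial (Fin b ⊕ Fin 2) ℚ) :
    q • (Ideal.Quotient.mk (stmt18_Irel b) p : Sring b)
      = Ideal.Quotient.mk (stmt18_Irel b) (C q * p) := by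
  have h1 : (Ideal.Quotient.mk (stmt18_Irel b)) (q • p)
      = q • (Ideal.Quotient.mk (stmt18_Irel b) p : Sring b) :=
    Submodule.Quotient.mk_smul (stmt18_Irel b) q p
  rw [← h1]
  congr 1
  exact smul_eq_C_mul p q

private lemma stmt18_sq_mk (b : ℕ) (i : Fin b) :
    (Ideal.Quotient.mk (stmt18_Irel b) (X (Sum.inl i)) : Sring b) ^ 2 = (1/4 : ℚ) • uv2 b := by
  rw [← map_pow, uv2, stmt18_smul_mk, Ideal.Quotient.mk_eq_mk_iff_sub_mem]
  exact Ideal.subset_span ⟨i, rfl⟩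

end Aux

set_option maxHeartbeats 1000000 in
set_option synthInstance.maxHeartbeats 400000 in
/-- in `S = ℚ[u,v][H₂',…,H_{b+1}']/(Hᵢ'² - ¼(u-v)²)` with `b ≥ 1`,
every elementary symmetric polynomial `e_j(H₂',…,H_{b+1}')` lies in the `ℚ`-linear span
of the elements `(u-v)^{2k}(H₂'+⋯+H_{b+1}')^ℓ`, and the recurrence
`e_j·(H₂'+⋯+H_{b+1}') = (j+1)e_{j+1} + ¼(u-v)²(b-j+1)e_{j-1}` holds (with
`e_{-1} = 0`). -/
theorem stmt_18 (b : ℕ) (hb : 1 ≤ b) :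
    (∀ j : ℕ, esym b j ∈ Submodule.span ℚ
      {x : Sring b | ∃ k l : ℕ, x = uv2 b ^ k * sumH b ^ l}) ∧
    (∀ j : ℕ, esym b j * sumH b
      = ((j : ℚ) + 1) • esym b (j + 1)
        + (((b : ℚ) - (j : ℚ) + 1) / 4) • (uv2 b * (if j = 0 then 0 else esym b (j - 1)))) := by
  classical
  set y : Fin b → Sring b := fun i => Ideal.Quotient.mk (stmt18_Irel b) (X (Sum.inl i)) with hy
  have hesym : ∀ j, esym b j
      = ∑ A ∈ Finset.powersetCard j (Finset.univ : Finset (Fin b)), ∏ i ∈ A, y i := by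
    intro j
    rw [esym, map_sum]
    exact Finset.sum_congr rfl fun A _ => map_prod _ _ _
  have hsum : sumH b = ∑ i, y i := by
    rw [sumH, map_sum]
  have hrec : ∀ j : ℕ, esym b j * sumH b
      = ((j : ℚ) + 1) • esym b (j + 1)
        + (((b : ℚ) - (j : ℚ) + 1) / 4) • (uv2 b * (if j = 0 then 0 else esym b (j - 1))) := by
    intro j
    simp only [hesym, hsum]
    rw [stmt18_main_id y]
    congr 1
    · rw [← Nat.cast_smul_eq_nsmul ℚ]
      norm_cast
    · have hterm : ∀ A ∈ Finset.powersetCard j (Finset.univ : Finset (Fin b)),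
          ∑ i ∈ A, y i ^ 2 * ∏ a ∈ A.erase i, y a
          = ∑ i ∈ A, ((1/4 : ℚ) • uv2 b) * ∏ a ∈ A.erase i, y a := by
        intro A _
        exact Finset.sum_congr rfl fun i _ => by rw [stmt18_sq_mk b i]
      rw [Finset.sum_congr rfl hterm]
      have hpull : ∑ A ∈ Finset.powersetCard j (Finset.univ : Finset (Fin b)),
          ∑ i ∈ A, ((1/4 : ℚ) • uv2 b) * ∏ a ∈ A.erase i, y a
          = (1/4 : ℚ) • (uv2 b * ∑ A ∈ Finset.powersetCard j (Finset.univ : Finset (Fin b)),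
              ∑ i ∈ A, ∏ a ∈ A.erase i, y a) := by
        simp only [Finset.mul_sum, Finset.smul_sum, smul_mul_assoc]
      rw [hpull]
      cases j with
      | zero =>
          simp
      | succ n =>
          rw [if_neg (Nat.succ_ne_zero n)]
          have h1 : ∑ A ∈ Finset.powersetCard (n+1) (Finset.univ : Finset (Fin b)),
              ∑ i ∈ A, ∏ a ∈ A.erase i, y a
              = ∑ B ∈ Finset.powersetCard n (Finset.univ : Finset (Fin b)),
                ∑ i ∈ Bᶜ, ∏ a ∈ B, y a := by
            have := stmt18_reidx (n := b) (j := n) y (fun _ => (1 : Sring b))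
            simpa using this
          by_cases hn : n ≤ b
          · have h2 : ∑ B ∈ Finset.powersetCard n (Finset.univ : Finset (Fin b)),
                ∑ i ∈ Bᶜ, ∏ a ∈ B, y a
                = (b - n : ℕ) • ∑ B ∈ Finset.powersetCard n (Finset.univ : Finset (Fin b)),
                    ∏ a ∈ B, y a := by
              rw [Finset.smul_sum]
              apply Finset.sum_congr rfl
              intro B hB
              rw [Finset.mem_powersetCard_univ] at hB
              rw [Finset.sum_const, Finset.card_compl, hB, Fintype.card_fin]
            rw [h1, h2, Nat.add_sub_cancel, mul_smul_comm, ← Nat.cast_smul_eq_nsmul ℚ,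
              smul_smul]
            congr 1
            rw [Nat.cast_sub hn]
            push_cast
            ring
          · push_neg at hn
            have hempty : Finset.powersetCard n (Finset.univ : Finset (Fin b)) = ∅ := by
              rw [Finset.powersetCard_eq_empty]
              simpa using hn
            rw [h1, Nat.add_sub_cancel, hempty]
            simp
  refine ⟨?_, hrec⟩
  set M := Submodule.span ℚ {x : Sring b | ∃ k l : ℕ, x = uv2 b ^ k * sumH b ^ l} with hM
  have hmulS : ∀ x ∈ M, x * sumH b ∈ M := by
    intro x hx
    refine Submodule.span_induction (p := fun x _ => x * sumH b ∈ M) ?_ ?_ ?_ ?_ hx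
    · rintro x ⟨k, l, rfl⟩
      exact Submodule.subset_span ⟨k, l+1, by ring⟩
    · simp only [zero_mul]; exact M.zero_mem
    · intro u v _ _ hu hv; rw [add_mul]; exact M.add_mem hu hv
    · intro q u _ hu; rw [smul_mul_assoc]; exact M.smul_mem q hu
  have hmulU : ∀ x ∈ M, uv2 b * x ∈ M := by
    intro x hx
    refine Submodule.span_induction (p := fun x _ => uv2 b * x ∈ M) ?_ ?_ ?_ ?_ hx
    · rintro x ⟨k, l, rfl⟩
      exact Submodule.subset_span ⟨k+1, l, by ring⟩
    · simp only [mul_zero]; exact M.zero_mem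
    · intro u v _ _ hu hv; rw [mul_add]; exact M.add_mem hu hv
    · intro q u _ hu; rw [mul_smul_comm]; exact M.smul_mem q hu
  have h0 : esym b 0 = 1 := by
    simp [esym]
  have h0mem : esym b 0 ∈ M := by
    rw [h0]
    exact Submodule.subset_span ⟨0, 0, by simp⟩
  have h1eq : esym b 1 = sumH b := by
    have := hrec 0
    rw [h0, if_pos rfl] at this
    simp only [one_mul, mul_zero, smul_zero, add_zero, Nat.cast_zero, zero_add, one_smul] at this
    exact this.symm
  have main : ∀ j, esym b j ∈ M ∧ esym b (j+1) ∈ M := by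
    intro j
    induction j with
    | zero =>
        refine ⟨h0mem, ?_⟩
        rw [h1eq]
        exact Submodule.subset_span ⟨0, 1, by simp⟩
    | succ n ih =>
        refine ⟨ih.2, ?_⟩
        have hr := hrec (n+1)
        rw [if_neg (Nat.succ_ne_zero n), Nat.add_sub_cancel] at hr
        have hne : ((n : ℚ) + 1) + 1 ≠ 0 := by positivity
        have heq : esym b (n+1+1)
            = (((n : ℚ) + 1) + 1)⁻¹ • (esym b (n+1) * sumH b
              - (((b : ℚ) - ((n : ℚ) + 1) + 1) / 4) • (uv2 b * esym b n)) := by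
          rw [hr]
          push_cast
          rw [add_sub_cancel_right, smul_smul, inv_mul_cancel₀ (by push_cast at hne ⊢; exact hne),
            one_smul]
        rw [heq]
        exact M.smul_mem _ (M.sub_mem (hmulS _ ih.2) (M.smul_mem _ (hmulU _ ih.1)))
  exact fun j => (main j).1
end
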